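/- arXiv:1711.08735 — 4 statements merged into one kernel-verified Lean document; each statement's English description precedes it below -/
import Mathlib

section
/- Let g : ℝ² → ℂ satisfy |g(ξ)| ≤ C (1 + ‖ξ‖²)^{−2} for some C > 0, let ξ₀ ∈ ℝ², and let (r_ħ)_{ħ∈(0,1]} be positive numbers with r_ħ ħ^{1/2} → +∞ as ħ → 0⁺. Then ħ Σ_{m ∈ ℤ², ‖m − ξ₀/ħ‖ ≥ r_ħ} |g(ħ^{1/2}(m − ξ₀/ħ))|² → 0 as ħ → 0⁺. -/
open MeasureTheory Filter Real
open scoped Topology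

noncomputable section

/-- The Euclidean inner product on `ℝ²`. -/
def dot2 (v w : ℝ × ℝ) : ℝ := v.1 * w.1 + v.2 * w.2

/-- The Euclidean norm on `ℝ²`. -/
def nrm2 (v : ℝ × ℝ) : ℝ := Real.sqrt (dot2 v v)

/-- The canonical embedding `ℤ² ↪ ℝ²`. -/
def toR2 (m : ℤ × ℤ) : ℝ × ℝ := ((m.1 : ℝ), (m.2 : ℝ))

/-- Rotation of an integer vector by `+π/2`. -/
def perpZ (v : ℤ × ℤ) : ℤ × ℤ := (-v.2, v.1)

/-- `v` generates a primitive rank-1 sublattice `Λ = ℤ v` of `ℤ²`. -/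
def Primitive (v : ℤ × ℤ) : Prop := Int.gcd v.1 v.2 = 1

/-- `L_Λ = ‖v_Λ‖`. -/
def LL (v : ℤ × ℤ) : ℝ := nrm2 (toR2 v)

/-- `H_Λ(ξ) = ⟨ξ, v_Λ⟩ / L_Λ`, where `v` is the generator `v_Λ` of `Λ`. -/
def HH (v : ℤ × ℤ) (ξ : ℝ × ℝ) : ℝ := dot2 ξ (toR2 v) / LL v

/-- Integral over a fundamental domain of the torus `𝕋² = ℝ²/ℤ²`. -/
def torusInt (f : ℝ × ℝ → ℂ) : ℂ :=
  ∫ x in Set.Icc ((0, 0) : ℝ × ℝ) ((1, 1) : ℝ × ℝ), f x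

/-- `e^{it}`. -/
def expI (t : ℝ) : ℂ := Complex.exp (Complex.I * (t : ℂ))



set_option maxHeartbeats 1000000

open Finset in
private lemma sum_inv_pow_four_le (k₀ : ℕ) (hk : 2 ≤ k₀) (M : ℕ) :
    ∑ j ∈ Finset.range M, (((j : ℝ) + k₀) ^ 4)⁻¹ ≤ 2 / (k₀ : ℝ) ^ 3 := by
  have hk2 : (2:ℝ) ≤ (k₀:ℝ) := by exact_mod_cast hk
  set f : ℕ → ℝ := fun j => ((j : ℝ) + k₀ - 1)⁻¹ with hf
  have hstep : ∀ j : ℕ, (((j : ℝ) + k₀) ^ 4)⁻¹ ≤ ((k₀:ℝ)^2)⁻¹ * (f j - f (j+1)) := by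
    intro j
    have hj : (0:ℝ) ≤ (j:ℝ) := Nat.cast_nonneg j
    have h1 : (0:ℝ) < (j:ℝ) + k₀ - 1 := by linarith
    have h2 : (0:ℝ) < (j:ℝ) + k₀ := by linarith
    have hdiff : f j - f (j+1) = (((j:ℝ) + k₀ - 1) * ((j:ℝ) + k₀))⁻¹ := by
      rw [hf]; push_cast
      rw [inv_sub_inv (by linarith : ((j:ℝ)+k₀-1) ≠ 0) (by nlinarith : ((j:ℝ)+1) + k₀ - 1 ≠ 0)]
      ring_nf
    have hsq : (k₀:ℝ)^2 ≤ ((j:ℝ)+k₀)^2 := by nlinarith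
    rw [hdiff, ← mul_inv]
    rw [inv_le_inv₀ (by positivity) (by positivity)]
    nlinarith [sq_nonneg ((j:ℝ) + k₀), mul_pos h1 h2]
  calc ∑ j ∈ Finset.range M, (((j : ℝ) + k₀) ^ 4)⁻¹
      ≤ ∑ j ∈ Finset.range M, ((k₀:ℝ)^2)⁻¹ * (f j - f (j+1)) := Finset.sum_le_sum (fun j _ => hstep j)
    _ = ((k₀:ℝ)^2)⁻¹ * (f 0 - f M) := by rw [← Finset.mul_sum, Finset.sum_range_sub']
    _ ≤ ((k₀:ℝ)^2)⁻¹ * f 0 := by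
        have h1 : 0 ≤ f M := inv_nonneg.mpr (by nlinarith [Nat.cast_nonneg (α := ℝ) M])
        have h2 : (0:ℝ) ≤ ((k₀:ℝ)^2)⁻¹ := by positivity
        nlinarith
    _ ≤ 2 / (k₀ : ℝ) ^ 3 := by
        have hx : (0:ℝ) < (k₀:ℝ)^2 * (((0:ℕ):ℝ)+k₀-1) := by push_cast; nlinarith
        rw [hf]; simp only
        rw [← mul_inv, inv_eq_one_div, div_le_div_iff₀ hx (by positivity)]
        push_cast; nlinarith

lemma summable_base : Summable (fun k : ℕ => (((k:ℝ)+1)^2)⁻¹) := by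
  have h := (summable_nat_add_iff (f := fun n : ℕ => 1 / (n:ℝ)^2) 1).mpr
    (Real.summable_one_div_nat_pow.mpr one_lt_two)
  refine h.congr fun n => ?_
  push_cast; rw [one_div]

lemma tsum_inv_pow_four_le (k₀ : ℕ) (hk : 2 ≤ k₀) :
    Summable (fun j : ℕ => (((j : ℝ) + k₀) ^ 4)⁻¹) ∧
    ∑' j : ℕ, (((j : ℝ) + k₀) ^ 4)⁻¹ ≤ 2 / (k₀ : ℝ) ^ 3 := by
  have hsum : Summable (fun j : ℕ => (((j : ℝ) + k₀) ^ 4)⁻¹) := by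
    refine summable_base.of_nonneg_of_le (fun j => by positivity) (fun j => ?_)
    have h1 : (0:ℝ) < (j:ℝ)+1 := by positivity
    have hk1 : (1:ℝ) ≤ (k₀:ℝ) := by exact_mod_cast Nat.one_le_of_lt hk
    rw [inv_le_inv₀ (by positivity) (by positivity)]
    have e1 : ((j:ℝ)+1)^2 ≤ ((j:ℝ)+k₀)^2 := by nlinarith [Nat.cast_nonneg (α := ℝ) j]
    have e2 : (1:ℝ) ≤ ((j:ℝ)+k₀)^2 := by nlinarith [Nat.cast_nonneg (α := ℝ) j]
    nlinarith [mul_le_mul e2 e1 (by positivity) (by positivity)]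
  refine ⟨hsum, Summable.tsum_le_of_sum_le hsum fun F => ?_⟩
  obtain ⟨M, hM⟩ := F.exists_nat_subset_range
  calc ∑ j ∈ F, (((j : ℝ) + k₀) ^ 4)⁻¹
      ≤ ∑ j ∈ Finset.range M, (((j : ℝ) + k₀) ^ 4)⁻¹ :=
        Finset.sum_le_sum_of_subset_of_nonneg hM (fun i _ _ => by positivity)
    _ ≤ 2 / (k₀ : ℝ) ^ 3 := sum_inv_pow_four_le k₀ hk M

lemma summable_U (hb : ℝ) (h0 : 0 < hb) (h1 : hb ≤ 1) :
    Summable (fun k : ℕ => ((1 + hb * (k:ℝ)^2)^2)⁻¹) := by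
  refine (summable_base.mul_left (4 * hb⁻¹^2)).of_nonneg_of_le (fun k => by positivity)
    (fun k => ?_)
  have h2 : (0:ℝ) < 1 + hb * (k:ℝ)^2 := by positivity
  have h3 : (0:ℝ) < ((k:ℝ)+1)^2 := by positivity
  have heq : (4 * hb⁻¹^2) * ((((k:ℝ)+1)^2)⁻¹) = ((hb^2 * ((k:ℝ)+1)^2)/4)⁻¹ := by
    field_simp
  rw [heq, inv_le_inv₀ (by positivity) (by positivity)]
  have hkey : hb * ((k:ℝ)+1)^2 / 2 ≤ 1 + hb * (k:ℝ)^2 := by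
    nlinarith [mul_nonneg h0.le (sq_nonneg ((k:ℝ)-1))]
  have h4 : (0:ℝ) ≤ hb * ((k:ℝ)+1)^2/2 := by positivity
  have h5 : (1:ℝ) ≤ ((k:ℝ)+1)^2 := by nlinarith [Nat.cast_nonneg (α := ℝ) k]
  have h6 := mul_self_le_mul_self h4 hkey
  nlinarith [h6, h5, mul_pos (mul_pos h0 h0) h3]

lemma tsum_U_split (hb : ℝ) (h0 : 0 < hb) (h1 : hb ≤ 1) (k₀ : ℕ) (hk : 2 ≤ k₀) :
    ∑' k : ℕ, ((1 + hb * (k:ℝ)^2)^2)⁻¹ ≤ (k₀:ℝ) + hb⁻¹^2 * (2 / (k₀:ℝ)^3) := by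
  have hsummable := summable_U hb h0 h1
  rw [← Summable.sum_add_tsum_nat_add k₀ hsummable]
  have hhead : ∑ k ∈ Finset.range k₀, ((1 + hb * (k:ℝ)^2)^2)⁻¹ ≤ (k₀:ℝ) := by
    calc ∑ k ∈ Finset.range k₀, ((1 + hb * (k:ℝ)^2)^2)⁻¹
        ≤ ∑ _k ∈ Finset.range k₀, (1:ℝ) := Finset.sum_le_sum fun k _ => by
          rw [inv_le_one_iff₀]; right
          nlinarith [mul_nonneg h0.le (sq_nonneg (k:ℝ)), sq_nonneg (hb * (k:ℝ)^2)]
      _ = (k₀:ℝ) := by simp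
  have htail : ∑' j : ℕ, ((1 + hb * ((j + k₀ : ℕ):ℝ)^2)^2)⁻¹ ≤ hb⁻¹^2 * (2 / (k₀:ℝ)^3) := by
    obtain ⟨hsum4, hbound4⟩ := tsum_inv_pow_four_le k₀ hk
    have hpt : ∀ j : ℕ, ((1 + hb * ((j + k₀ : ℕ):ℝ)^2)^2)⁻¹ ≤ hb⁻¹^2 * (((j:ℝ) + k₀)^4)⁻¹ := by
      intro j
      rw [Nat.cast_add, inv_pow, ← mul_inv]
      have ha : (0:ℝ) ≤ (j:ℝ) + k₀ := by positivity
      rw [inv_le_inv₀ (by positivity) (by positivity)]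
      nlinarith [mul_nonneg h0.le (sq_nonneg ((j:ℝ)+(k₀:ℝ))), sq_nonneg (hb * ((j:ℝ)+(k₀:ℝ))^2)]
    calc ∑' j : ℕ, ((1 + hb * ((j + k₀ : ℕ):ℝ)^2)^2)⁻¹
        ≤ ∑' j : ℕ, hb⁻¹^2 * (((j:ℝ) + k₀)^4)⁻¹ :=
          Summable.tsum_le_tsum hpt ((summable_nat_add_iff k₀).mpr hsummable) (hsum4.mul_left _)
      _ = hb⁻¹^2 * ∑' j : ℕ, (((j:ℝ) + k₀)^4)⁻¹ := tsum_mul_left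
      _ ≤ hb⁻¹^2 * (2 / (k₀:ℝ)^3) := mul_le_mul_of_nonneg_left hbound4 (by positivity)
  linarith

lemma tsum_U_le (hb : ℝ) (h0 : 0 < hb) (h1 : hb ≤ 1) :
    ∑' k : ℕ, ((1 + hb * (k:ℝ)^2)^2)⁻¹ ≤ 5 / Real.sqrt hb := by
  have hs : 0 < Real.sqrt hb := Real.sqrt_pos.mpr h0
  set s := Real.sqrt hb with hsdef
  have hs2 : s^2 = hb := Real.sq_sqrt h0.le
  have hs1 : s ≤ 1 := Real.sqrt_le_one.mpr h1
  have hT1 : 1 ≤ s⁻¹ := (one_le_inv₀ hs).mpr hs1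
  have hbound := tsum_U_split hb h0 h1 (⌊s⁻¹⌋₊ + 2) (Nat.le_add_left 2 _)
  set k₀ : ℕ := ⌊s⁻¹⌋₊ + 2 with hk₀def
  have hge : s⁻¹ ≤ (k₀:ℝ) := by
    have := (Nat.lt_floor_add_one s⁻¹).le
    push_cast [hk₀def]; linarith
  have hle : (k₀:ℝ) ≤ 3 * s⁻¹ := by
    have := Nat.floor_le (by positivity : (0:ℝ) ≤ s⁻¹)
    push_cast [hk₀def]; linarith
  refine hbound.trans ?_
  have hk₀pos : (0:ℝ) < (k₀:ℝ) := by positivity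
  have h2 : hb⁻¹^2 * (2 / (k₀:ℝ)^3) ≤ hb⁻¹^2 * (2 / (s⁻¹)^3) := by
    apply mul_le_mul_of_nonneg_left _ (by positivity)
    apply div_le_div_of_nonneg_left (by norm_num) (by positivity)
    gcongr
  have h3 : hb⁻¹^2 * (2 / (s⁻¹)^3) = 2 / s := by
    rw [← hs2]; field_simp
  have h4 : (k₀:ℝ) ≤ 3 / s := by
    rw [div_eq_mul_inv]; linarith
  rw [show (5:ℝ)/s = 3/s + 2/s by ring]
  rw [h3] at h2
  linarith

noncomputable def zmap (c : ℝ) (n : ℤ) : ℕ × Bool := (⌊|(n:ℝ) - c|⌋₊, decide (c ≤ (n:ℝ)))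

lemma zmap_inj (c : ℝ) : Function.Injective (zmap c) := by
  intro n n' h
  rw [zmap, zmap, Prod.mk.injEq] at h
  obtain ⟨h1, h2⟩ := h
  have h2' : (c ≤ (n:ℝ)) ↔ (c ≤ (n':ℝ)) := by
    constructor <;> intro hx <;> [exact of_decide_eq_true (h2 ▸ decide_eq_true hx);
      exact of_decide_eq_true (h2.symm ▸ decide_eq_true hx)]
  have key : |(n:ℝ) - (n':ℝ)| < 1 := by
    by_cases hc : c ≤ (n:ℝ)
    · have hc' : c ≤ (n':ℝ) := h2'.mp hc
      have e1 : |(n:ℝ) - c| = (n:ℝ) - c := abs_of_nonneg (by linarith)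
      have e2 : |(n':ℝ) - c| = (n':ℝ) - c := abs_of_nonneg (by linarith)
      have f1 := Nat.floor_le (by linarith : (0:ℝ) ≤ (n:ℝ) - c)
      have f2 := Nat.floor_le (by linarith : (0:ℝ) ≤ (n':ℝ) - c)
      have g1 := Nat.lt_floor_add_one ((n:ℝ) - c)
      have g2 := Nat.lt_floor_add_one ((n':ℝ) - c)
      rw [e1, e2] at h1
      rw [h1] at f1 g1
      rw [abs_lt]; constructor <;> linarith
    · push_neg at hc
      have hc' : (n':ℝ) < c := by by_contra hx; push_neg at hx; exact absurd (h2'.mpr hx) (not_le.mpr hc)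
      have e1 : |(n:ℝ) - c| = c - (n:ℝ) := by rw [abs_of_nonpos (by linarith)]; ring
      have e2 : |(n':ℝ) - c| = c - (n':ℝ) := by rw [abs_of_nonpos (by linarith)]; ring
      rw [e1, e2] at h1
      have f1 := Nat.floor_le (by linarith : (0:ℝ) ≤ c - (n:ℝ))
      have f2 := Nat.floor_le (by linarith : (0:ℝ) ≤ c - (n':ℝ))
      have g1 := Nat.lt_floor_add_one (c - (n:ℝ))
      have g2 := Nat.lt_floor_add_one (c - (n':ℝ))
      rw [h1] at f1 g1
      rw [abs_lt]; constructor <;> linarith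
  have : |n - n'| < 1 := by exact_mod_cast key
  have := Int.abs_lt_one_iff.mp this
  linarith [this]

lemma prodBool (h : ℕ → ℝ) (hs : Summable h) (hnn : ∀ k, 0 ≤ h k) :
    Summable (fun p : ℕ × Bool => h p.1) ∧ ∑' p : ℕ × Bool, h p.1 = 2 * ∑' k, h k := by
  have hsum : Summable (fun p : ℕ × Bool => h p.1) := by
    have := hs.mul_of_nonneg (Summable.of_finite (f := fun _ : Bool => (1:ℝ)))
      (fun k => hnn k) (fun _ => zero_le_one)
    simpa using this
  refine ⟨hsum, ?_⟩
  rw [Summable.tsum_prod' hsum (fun b => Summable.of_finite)]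
  have he : ∀ b : ℕ, ∑' _c : Bool, h b = 2 * h b := by intro b; rw [tsum_bool]; ring
  rw [tsum_congr he, tsum_mul_left]

lemma int_sum (hb : ℝ) (h0 : 0 < hb) (h1 : hb ≤ 1) (c : ℝ) :
    Summable (fun n : ℤ => ((1 + hb * ((n:ℝ)-c)^2)^2)⁻¹) ∧
    ∑' n : ℤ, ((1 + hb * ((n:ℝ)-c)^2)^2)⁻¹ ≤ 10 / Real.sqrt hb := by
  obtain ⟨hgsum, hgtsum⟩ := prodBool (fun k => ((1 + hb * (k:ℝ)^2)^2)⁻¹)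
    (summable_U hb h0 h1) (fun k => by positivity)
  have hpt : ∀ n : ℤ, ((1 + hb * ((n:ℝ)-c)^2)^2)⁻¹ ≤
      ((1 + hb * (((zmap c n).1:ℕ):ℝ)^2)^2)⁻¹ := by
    intro n
    have hfl : ((⌊|(n:ℝ) - c|⌋₊:ℝ)) ≤ |(n:ℝ) - c| := Nat.floor_le (abs_nonneg _)
    have hsq : ((⌊|(n:ℝ) - c|⌋₊:ℝ))^2 ≤ ((n:ℝ)-c)^2 := by
      rw [← sq_abs ((n:ℝ)-c)]
      exact pow_le_pow_left₀ (Nat.cast_nonneg _) hfl 2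
    show ((1 + hb * ((n:ℝ)-c)^2)^2)⁻¹ ≤ ((1 + hb * ((⌊|(n:ℝ) - c|⌋₊:ℕ):ℝ)^2)^2)⁻¹
    rw [inv_le_inv₀ (by positivity) (by positivity)]
    have h5 : 1 + hb*((⌊|(n:ℝ) - c|⌋₊:ℝ))^2 ≤ 1 + hb*((n:ℝ)-c)^2 := by
      nlinarith [mul_le_mul_of_nonneg_left hsq h0.le]
    exact pow_le_pow_left₀ (by positivity) h5 2
  have hfs : Summable (fun n : ℤ => ((1 + hb * ((n:ℝ)-c)^2)^2)⁻¹) :=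
    (hgsum.comp_injective (zmap_inj c)).of_nonneg_of_le (fun n => by positivity) hpt
  refine ⟨hfs, ?_⟩
  calc ∑' n : ℤ, ((1 + hb * ((n:ℝ)-c)^2)^2)⁻¹
      ≤ ∑' p : ℕ × Bool, ((1 + hb * ((p.1:ℕ):ℝ)^2)^2)⁻¹ :=
        Summable.tsum_le_tsum_of_inj (zmap c) (zmap_inj c) (fun p _ => by positivity) hpt hfs hgsum
    _ = 2 * ∑' k : ℕ, ((1 + hb * (k:ℝ)^2)^2)⁻¹ := hgtsum
    _ ≤ 2 * (5 / Real.sqrt hb) := by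
        have := tsum_U_le hb h0 h1; linarith
    _ = 10 / Real.sqrt hb := by ring

lemma nat_tail_sum (hb : ℝ) (h0 : 0 < hb) (h1 : hb ≤ 1) (k₀ : ℕ) (hk : 2 ≤ k₀) :
    Summable (fun k : ℕ => if k₀ ≤ k then (hb^2 * (k:ℝ)^4)⁻¹ else 0) ∧
    ∑' k : ℕ, (if k₀ ≤ k then (hb^2 * (k:ℝ)^4)⁻¹ else 0) ≤ hb⁻¹^2 * (2/(k₀:ℝ)^3) := by
  have hsumh : Summable (fun k : ℕ => if k₀ ≤ k then (hb^2 * (k:ℝ)^4)⁻¹ else 0) := by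
    refine ((summable_base.mul_left (4*hb⁻¹^2))).of_nonneg_of_le
      (fun k => by split <;> positivity) (fun k => ?_)
    by_cases hc : k₀ ≤ k
    · rw [if_pos hc]
      have hk1 : (1:ℝ) ≤ (k:ℝ) := by exact_mod_cast le_trans (by norm_num) (le_trans hk hc)
      rw [show (4*hb⁻¹^2) * ((((k:ℝ)+1)^2)⁻¹) = (hb^2*((k:ℝ)+1)^2/4)⁻¹ by field_simp]
      rw [inv_le_inv₀ (by positivity) (by positivity)]
      have e2 : ((k:ℝ)+1)^2 ≤ 4*(k:ℝ)^2 := by nlinarith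
      have e3 : (k:ℝ)^2 ≤ (k:ℝ)^4 := by nlinarith [sq_nonneg (k:ℝ)]
      have e4 := mul_le_mul_of_nonneg_left (e2.trans (by linarith) : ((k:ℝ)+1)^2 ≤ 4*(k:ℝ)^4) (sq_nonneg hb)
      linarith
    · rw [if_neg hc]; positivity
  refine ⟨hsumh, Summable.tsum_le_of_sum_le hsumh fun F => ?_⟩
  obtain ⟨M, hM⟩ := F.exists_nat_subset_range
  set N := max M k₀ with hN
  have hMN : F ⊆ Finset.range N := hM.trans (Finset.range_subset_range.mpr (le_max_left _ _))
  have hstep : ∑ k ∈ F, (if k₀ ≤ k then (hb^2 * (k:ℝ)^4)⁻¹ else 0)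
      ≤ ∑ k ∈ Finset.range N, (if k₀ ≤ k then (hb^2 * (k:ℝ)^4)⁻¹ else 0) :=
    Finset.sum_le_sum_of_subset_of_nonneg hMN (fun i _ _ => by split <;> positivity)
  refine hstep.trans ?_
  rw [Finset.range_eq_Ico, ← Finset.sum_Ico_consecutive _ (Nat.zero_le k₀) (le_max_right M k₀)]
  have hzero : ∑ k ∈ Finset.Ico 0 k₀, (if k₀ ≤ k then (hb^2 * (k:ℝ)^4)⁻¹ else 0) = 0 := by
    apply Finset.sum_eq_zero
    intro k hkk
    rw [Finset.mem_Ico] at hkk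
    rw [if_neg (by omega)]
  rw [hzero, zero_add]
  have hcongr : ∑ k ∈ Finset.Ico k₀ N, (if k₀ ≤ k then (hb^2 * (k:ℝ)^4)⁻¹ else 0)
      = ∑ i ∈ Finset.range (N - k₀), hb⁻¹^2 * (((i:ℝ) + k₀)^4)⁻¹ := by
    rw [Finset.sum_Ico_eq_sum_range]
    refine Finset.sum_congr rfl (fun i _ => ?_)
    rw [if_pos (Nat.le_add_right _ _)]
    push_cast
    rw [add_comm ((k₀:ℝ)) ((i:ℝ)), mul_inv, inv_pow]
  rw [hcongr, ← Finset.mul_sum]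
  exact mul_le_mul_of_nonneg_left (sum_inv_pow_four_le k₀ hk _) (by positivity)

lemma int_tail (hb : ℝ) (h0 : 0 < hb) (h1 : hb ≤ 1) (c S : ℝ) (hS : 2 ≤ S) :
    Summable (fun n : ℤ => if S ≤ |(n:ℝ)-c| then ((1 + hb * ((n:ℝ)-c)^2)^2)⁻¹ else 0) ∧
    ∑' n : ℤ, (if S ≤ |(n:ℝ)-c| then ((1 + hb * ((n:ℝ)-c)^2)^2)⁻¹ else 0)
      ≤ 32 * hb⁻¹^2 / S^3 := by
  set k₀ : ℕ := ⌊S⌋₊ with hk₀def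
  have hk : 2 ≤ k₀ := Nat.le_floor (by exact_mod_cast hS)
  obtain ⟨hsumh, htsumh⟩ := nat_tail_sum hb h0 h1 k₀ hk
  obtain ⟨hgsum, hgtsum⟩ := prodBool _ hsumh (fun k => by positivity)
  have hpt : ∀ n : ℤ, (if S ≤ |(n:ℝ)-c| then ((1 + hb * ((n:ℝ)-c)^2)^2)⁻¹ else 0) ≤
      (if k₀ ≤ (zmap c n).1 then (hb^2 * (((zmap c n).1:ℕ):ℝ)^4)⁻¹ else 0) := by
    intro n
    by_cases hcond : S ≤ |(n:ℝ)-c|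
    · rw [if_pos hcond, if_pos (by exact Nat.floor_mono hcond)]
      have hfl : ((⌊|(n:ℝ) - c|⌋₊:ℝ)) ≤ |(n:ℝ) - c| := Nat.floor_le (abs_nonneg _)
      have hsq : ((⌊|(n:ℝ) - c|⌋₊:ℝ))^2 ≤ ((n:ℝ)-c)^2 := by
        rw [← sq_abs ((n:ℝ)-c)]
        exact pow_le_pow_left₀ (Nat.cast_nonneg _) hfl 2
      have hkfl : 2 ≤ ⌊|(n:ℝ) - c|⌋₊ := le_trans hk (Nat.floor_mono hcond)
      have hflpos : (0:ℝ) < ((⌊|(n:ℝ) - c|⌋₊:ℕ):ℝ) := by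
        have : (0:ℕ) < ⌊|(n:ℝ) - c|⌋₊ := by omega
        exact_mod_cast this
      show ((1 + hb * ((n:ℝ)-c)^2)^2)⁻¹ ≤ (hb^2 * ((⌊|(n:ℝ) - c|⌋₊:ℕ):ℝ)^4)⁻¹
      rw [inv_le_inv₀ (by positivity) (mul_pos (by positivity) (pow_pos hflpos 4))]
      have h4 : (0:ℝ) ≤ hb * ((⌊|(n:ℝ) - c|⌋₊:ℝ))^2 := by positivity
      have h5 : hb * ((⌊|(n:ℝ) - c|⌋₊:ℝ))^2 ≤ 1 + hb*((n:ℝ)-c)^2 := by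
        nlinarith [mul_le_mul_of_nonneg_left hsq h0.le]
      nlinarith [mul_self_le_mul_self h4 h5]
    · rw [if_neg hcond]
      split <;> positivity
  have hfs : Summable (fun n : ℤ => if S ≤ |(n:ℝ)-c| then ((1 + hb * ((n:ℝ)-c)^2)^2)⁻¹ else 0) :=
    (hgsum.comp_injective (zmap_inj c)).of_nonneg_of_le
      (fun n => by split <;> positivity) hpt
  refine ⟨hfs, ?_⟩
  have hSpos : (0:ℝ) < S := by linarith
  have hk₀S : S/2 ≤ (k₀:ℝ) := by
    have := Nat.sub_one_lt_floor S
    rw [hk₀def]; linarith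
  calc ∑' n : ℤ, (if S ≤ |(n:ℝ)-c| then ((1 + hb * ((n:ℝ)-c)^2)^2)⁻¹ else 0)
      ≤ ∑' p : ℕ × Bool, (if k₀ ≤ p.1 then (hb^2 * ((p.1:ℕ):ℝ)^4)⁻¹ else 0) :=
        Summable.tsum_le_tsum_of_inj (zmap c) (zmap_inj c)
          (fun p _ => by split <;> positivity) hpt hfs hgsum
    _ = 2 * ∑' k : ℕ, (if k₀ ≤ k then (hb^2 * (k:ℝ)^4)⁻¹ else 0) := hgtsum
    _ ≤ 2 * (hb⁻¹^2 * (2/(k₀:ℝ)^3)) := by linarith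
    _ ≤ 32 * hb⁻¹^2 / S^3 := by
        have hkp : (0:ℝ) < (k₀:ℝ) := by positivity
        have h8 : S^3 ≤ 8 * (k₀:ℝ)^3 := by
          nlinarith [pow_le_pow_left₀ (by positivity : (0:ℝ) ≤ S/2) hk₀S 3]
        have h9 : 4/(k₀:ℝ)^3 ≤ 32/S^3 := by
          rw [div_le_div_iff₀ (by positivity) (by positivity)]
          nlinarith [h8]
        calc 2 * (hb⁻¹^2 * (2/(k₀:ℝ)^3)) = hb⁻¹^2 * (4/(k₀:ℝ)^3) := by ring
          _ ≤ hb⁻¹^2 * (32/S^3) := mul_le_mul_of_nonneg_left h9 (by positivity)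
          _ = 32 * hb⁻¹^2 / S^3 := by ring


lemma tsum_prod_mul {f g : ℤ → ℝ} (hf : Summable f) (hg : Summable g)
    (hf0 : ∀ n, 0 ≤ f n) (hg0 : ∀ n, 0 ≤ g n) :
    ∑' m : ℤ × ℤ, f m.1 * g m.2 = (∑' n, f n) * (∑' n, g n) := by
  have hs := hf.mul_of_nonneg hg (fun n => hf0 n) (fun n => hg0 n)
  rw [Summable.tsum_prod' hs (fun b => hg.mul_left (f b))]
  calc ∑' (n : ℤ) (k : ℤ), f n * g k = ∑' n : ℤ, f n * ∑' k, g k :=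
        tsum_congr fun n => tsum_mul_left
    _ = (∑' n, f n) * (∑' n, g n) := tsum_mul_right

/-- quadratic tail bound for the rescaled lattice sums outside balls of
radii `r_hb ≫ hb^{-1/2}` centered at `ξ₀/hb`. -/
theorem stmt9
    (g : ℝ × ℝ → ℂ) (C : ℝ) (hC : 0 < C)
    (hg : ∀ ξ : ℝ × ℝ, ‖g ξ‖ ≤ C / (1 + nrm2 ξ ^ 2) ^ 2)
    (ξ₀ : ℝ × ℝ) (r : ℝ → ℝ) (hr : ∀ hb ∈ Set.Ioc (0:ℝ) 1, 0 < r hb)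
    (hrinf : Tendsto (fun hb => r hb * Real.sqrt hb) (𝓝[>] (0:ℝ)) atTop) :
    Tendsto
      (fun hb => hb * ∑' m : ℤ × ℤ,
        if r hb ≤ nrm2 (toR2 m - hb⁻¹ • ξ₀) then
          ‖g (Real.sqrt hb • (toR2 m - hb⁻¹ • ξ₀))‖ ^ 2 else 0)
      (𝓝[>] (0:ℝ)) (𝓝 0) := by
  have hnrm : ∀ v : ℝ × ℝ, nrm2 v ^ 2 = v.1^2 + v.2^2 := by
    intro v
    rw [nrm2, Real.sq_sqrt (by simp only [dot2]; nlinarith [mul_self_nonneg v.1, mul_self_nonneg v.2] : 0 ≤ dot2 v v), dot2]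
    ring
  have hnrm0 : ∀ v : ℝ × ℝ, 0 ≤ nrm2 v := fun v => Real.sqrt_nonneg _
  have hw : Real.sqrt 2 ^ 2 = 2 := Real.sq_sqrt (by norm_num)
  have hw0 : 0 < Real.sqrt 2 := Real.sqrt_pos.mpr (by norm_num)
  have hw15 : Real.sqrt 2 ≤ 1.5 := by
    rw [show (1.5:ℝ) = Real.sqrt (1.5^2) from (Real.sqrt_sq (by norm_num)).symm]
    exact Real.sqrt_le_sqrt (by norm_num)
  have hev1 : ∀ᶠ hb in 𝓝[>] (0:ℝ), hb ∈ Set.Ioc (0:ℝ) 1 :=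
    Ioc_mem_nhdsGT_of_mem (by constructor <;> norm_num)
  have hev2 : ∀ᶠ hb in 𝓝[>] (0:ℝ), 3 ≤ r hb * Real.sqrt hb :=
    hrinf.eventually_ge_atTop 3
  have hnonneg : ∀ᶠ hb in 𝓝[>] (0:ℝ), 0 ≤ hb * ∑' m : ℤ × ℤ,
      (if r hb ≤ nrm2 (toR2 m - hb⁻¹ • ξ₀) then
          ‖g (Real.sqrt hb • (toR2 m - hb⁻¹ • ξ₀))‖ ^ 2 else 0) := by
    filter_upwards [hev1] with hb h1
    exact mul_nonneg h1.1.le (tsum_nonneg fun m => by positivity)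
  have hbound : ∀ᶠ hb in 𝓝[>] (0:ℝ), hb * (∑' m : ℤ × ℤ,
      (if r hb ≤ nrm2 (toR2 m - hb⁻¹ • ξ₀) then
          ‖g (Real.sqrt hb • (toR2 m - hb⁻¹ • ξ₀))‖ ^ 2 else 0))
      ≤ 3000 * C^2 * ((r hb * Real.sqrt hb)^3)⁻¹ := by
    filter_upwards [hev1, hev2] with hb hIoc h3
    obtain ⟨h0, h1⟩ := hIoc
    set q := Real.sqrt hb with hqdef
    have hq0 : 0 < q := Real.sqrt_pos.mpr h0
    have hq2 : q^2 = hb := Real.sq_sqrt h0.le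
    have hq1 : q ≤ 1 := Real.sqrt_le_one.mpr h1
    set R := r hb with hRdef
    have hR0 : 0 < R := hr hb ⟨h0, h1⟩
    have hR3 : 3 ≤ R := le_trans h3 (mul_le_of_le_one_right hR0.le hq1)
    set S := R / Real.sqrt 2 with hSdef
    have hS0 : 0 < S := div_pos hR0 hw0
    have hS2 : 2 ≤ S := by
      rw [hSdef, le_div_iff₀ hw0]; linarith
    set c₁ := hb⁻¹ * ξ₀.1 with hc₁
    set c₂ := hb⁻¹ * ξ₀.2 with hc₂
    clear_value S
    obtain ⟨hU1s, hU1le⟩ := int_sum hb h0 h1 c₁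
    obtain ⟨hU2s, hU2le⟩ := int_sum hb h0 h1 c₂
    obtain ⟨hA1s, hA1le⟩ := int_tail hb h0 h1 c₁ S hS2
    obtain ⟨hB2s, hB2le⟩ := int_tail hb h0 h1 c₂ S hS2
    set U1 : ℤ → ℝ := fun n => ((1 + hb * ((n:ℝ)-c₁)^2)^2)⁻¹ with hU1
    set U2 : ℤ → ℝ := fun n => ((1 + hb * ((n:ℝ)-c₂)^2)^2)⁻¹ with hU2
    set A1 : ℤ → ℝ := fun n => if S ≤ |(n:ℝ)-c₁| then ((1 + hb * ((n:ℝ)-c₁)^2)^2)⁻¹ else 0 with hA1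
    set B2 : ℤ → ℝ := fun n => if S ≤ |(n:ℝ)-c₂| then ((1 + hb * ((n:ℝ)-c₂)^2)^2)⁻¹ else 0 with hB2
    have hU1nn : ∀ n, 0 ≤ U1 n := fun n => by rw [hU1]; positivity
    have hU2nn : ∀ n, 0 ≤ U2 n := fun n => by rw [hU2]; positivity
    have hA1nn : ∀ n, 0 ≤ A1 n := fun n => by rw [hA1]; dsimp only; split <;> positivity
    have hB2nn : ∀ n, 0 ≤ B2 n := fun n => by rw [hB2]; dsimp only; split <;> positivity
    clear_value U1 U2 A1 B2
    have hM1s : Summable (fun m : ℤ × ℤ => A1 m.1 * U2 m.2) :=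
      hA1s.mul_of_nonneg hU2s (fun n => hA1nn n) (fun n => hU2nn n)
    have hM2s : Summable (fun m : ℤ × ℤ => U1 m.1 * B2 m.2) :=
      hU1s.mul_of_nonneg hB2s (fun n => hU1nn n) (fun n => hB2nn n)
    set P : ℤ × ℤ → ℝ := fun m => C^2 * (A1 m.1 * U2 m.2 + U1 m.1 * B2 m.2) with hP
    have hPnn : ∀ m, 0 ≤ P m := fun m => by
      rw [hP]
      exact mul_nonneg (sq_nonneg C) (add_nonneg (mul_nonneg (hA1nn m.1) (hU2nn m.2))
        (mul_nonneg (hU1nn m.1) (hB2nn m.2)))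
    have hPs : Summable P := (hM1s.add hM2s).mul_left _
    have hpt : ∀ m : ℤ × ℤ,
        (if R ≤ nrm2 (toR2 m - hb⁻¹ • ξ₀) then
          ‖g (q • (toR2 m - hb⁻¹ • ξ₀))‖ ^ 2 else 0) ≤ P m := by
      intro m
      set x := (m.1:ℝ) - c₁ with hx
      set y := (m.2:ℝ) - c₂ with hy
      have hv : toR2 m - hb⁻¹ • ξ₀ = (x, y) := by
        rw [hx, hy, hc₁, hc₂, toR2]; rfl
      clear_value x y
      by_cases hcond : R ≤ nrm2 (toR2 m - hb⁻¹ • ξ₀)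
      · rw [if_pos hcond]
        have hxy : nrm2 (q • (toR2 m - hb⁻¹ • ξ₀)) ^ 2 = hb * (x^2 + y^2) := by
          rw [hv, hnrm]
          show (q * x)^2 + (q * y)^2 = hb * (x^2+y^2)
          rw [← hq2]; ring
        have hd2 : R^2 ≤ x^2 + y^2 := by
          rw [hv] at hcond
          have h5 := pow_le_pow_left₀ hR0.le hcond 2
          have h6 := hnrm ((x, y) : ℝ × ℝ)
          simp only at h6
          linarith
        have hgb := hg (q • (toR2 m - hb⁻¹ • ξ₀))
        rw [hxy] at hgb
        have hg2 : ‖g (q • (toR2 m - hb⁻¹ • ξ₀))‖^2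
            ≤ C^2 * (((1 + hb * x^2)^2)⁻¹ * ((1 + hb * y^2)^2)⁻¹) := by
          have hsq := pow_le_pow_left₀ (norm_nonneg _) hgb 2
          refine hsq.trans ?_
          rw [div_pow, div_eq_mul_inv, ← mul_inv]
          apply mul_le_mul_of_nonneg_left _ (by positivity)
          rw [inv_le_inv₀ (by positivity) (by positivity)]
          have l1 : 1 + hb * x^2 ≤ 1 + hb * (x^2+y^2) := by nlinarith [mul_nonneg h0.le (sq_nonneg y)]
          have l2 : 1 + hb * y^2 ≤ 1 + hb * (x^2+y^2) := by nlinarith [mul_nonneg h0.le (sq_nonneg x)]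
          have p1 : (0:ℝ) < 1 + hb * x^2 := by positivity
          have p2 : (0:ℝ) < 1 + hb * y^2 := by positivity
          calc (1 + hb * x^2)^2 * (1 + hb * y^2)^2
              ≤ (1 + hb * (x^2+y^2))^2 * (1 + hb * (x^2+y^2))^2 :=
                mul_le_mul (pow_le_pow_left₀ p1.le l1 2) (pow_le_pow_left₀ p2.le l2 2)
                  (by positivity) (by positivity)
            _ = ((1 + hb * (x^2+y^2))^2)^2 := by ring
        have hS2' : S^2 = R^2/2 := by rw [hSdef, div_pow, hw]
        have hgU : ‖g (q • (toR2 m - hb⁻¹ • ξ₀))‖^2 ≤ C^2 * (U1 m.1 * U2 m.2) := by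
          rw [hU1, hU2]; dsimp only; rw [← hx, ← hy]; exact hg2
        by_cases hbig : R^2/2 ≤ x^2
        · have hSx : S ≤ |x| := by
            rw [show S = Real.sqrt (S^2) from (Real.sqrt_sq hS0.le).symm,
              ← Real.sqrt_sq_eq_abs]
            exact Real.sqrt_le_sqrt (by linarith)
          have hAeq : A1 m.1 = U1 m.1 := by
            rw [hA1, hU1]; dsimp only; rw [← hx, if_pos hSx]
          rw [hP]; dsimp only
          rw [hAeq]
          calc ‖g (q • (toR2 m - hb⁻¹ • ξ₀))‖^2 ≤ C^2 * (U1 m.1 * U2 m.2) := hgU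
            _ ≤ C^2 * (U1 m.1 * U2 m.2 + U1 m.1 * B2 m.2) :=
              mul_le_mul_of_nonneg_left
                (le_add_of_nonneg_right (mul_nonneg (hU1nn m.1) (hB2nn m.2))) (sq_nonneg C)
        · push_neg at hbig
          have hbigy : R^2/2 ≤ y^2 := by linarith
          have hSy : S ≤ |y| := by
            rw [show S = Real.sqrt (S^2) from (Real.sqrt_sq hS0.le).symm,
              ← Real.sqrt_sq_eq_abs]
            exact Real.sqrt_le_sqrt (by linarith)
          have hBeq : B2 m.2 = U2 m.2 := by
            rw [hB2, hU2]; dsimp only; rw [← hy, if_pos hSy]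
          rw [hP]; dsimp only
          rw [hBeq]
          calc ‖g (q • (toR2 m - hb⁻¹ • ξ₀))‖^2 ≤ C^2 * (U1 m.1 * U2 m.2) := hgU
            _ ≤ C^2 * (A1 m.1 * U2 m.2 + U1 m.1 * U2 m.2) :=
              mul_le_mul_of_nonneg_left
                (le_add_of_nonneg_left (mul_nonneg (hA1nn m.1) (hU2nn m.2))) (sq_nonneg C)
      · rw [if_neg hcond]
        exact hPnn m
    have hts : Summable (fun m : ℤ × ℤ =>
        if R ≤ nrm2 (toR2 m - hb⁻¹ • ξ₀) then
          ‖g (q • (toR2 m - hb⁻¹ • ξ₀))‖ ^ 2 else 0) :=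
      hPs.of_nonneg_of_le (fun m => by split <;> positivity) hpt
    have hle1 := Summable.tsum_le_tsum hpt hts hPs
    have htP : ∑' m : ℤ × ℤ, P m
        = C^2 * ((∑' n, A1 n) * (∑' n, U2 n) + (∑' n, U1 n) * (∑' n, B2 n)) := by
      rw [hP, tsum_mul_left]
      congr 1
      rw [Summable.tsum_add hM1s hM2s, tsum_prod_mul hA1s hU2s hA1nn hU2nn,
        tsum_prod_mul hU1s hB2s hU1nn hB2nn]
    have nA1 : 0 ≤ ∑' n, A1 n := tsum_nonneg hA1nn
    have nU1 : 0 ≤ ∑' n, U1 n := tsum_nonneg hU1nn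
    have hm1 : (∑' n, A1 n) * (∑' n, U2 n) ≤ (32 * hb⁻¹^2 / S^3) * (10 / q) :=
      mul_le_mul hA1le hU2le (tsum_nonneg hU2nn) (by positivity)
    have hm2 : (∑' n, U1 n) * (∑' n, B2 n) ≤ (10 / q) * (32 * hb⁻¹^2 / S^3) :=
      mul_le_mul hU1le hB2le (tsum_nonneg hB2nn) (by positivity)
    have hsum_le : ∑' m : ℤ × ℤ, P m
        ≤ C^2 * ((32 * hb⁻¹^2 / S^3) * (10 / q) + (10 / q) * (32 * hb⁻¹^2 / S^3)) := by
      rw [htP]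
      exact mul_le_mul_of_nonneg_left (add_le_add hm1 hm2) (sq_nonneg C)
    have harith : hb * (C^2 * ((32 * hb⁻¹^2 / S^3) * (10 / q) + (10 / q) * (32 * hb⁻¹^2 / S^3)))
        ≤ 3000 * C^2 * ((R * q)^3)⁻¹ := by
      have e1 : hb * (C^2 * ((32 * hb⁻¹^2 / S^3) * (10 / q) + (10 / q) * (32 * hb⁻¹^2 / S^3)))
          = 640 * C^2 * (Real.sqrt 2)^3 / (R^3 * q^3) := by
        rw [hSdef, ← hq2]
        field_simp
        ring
      have e2 : 3000 * C^2 * ((R * q)^3)⁻¹ = 3000 * C^2 / (R^3 * q^3) := by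
        rw [mul_pow, ← div_eq_mul_inv]
      rw [e1, e2, div_le_div_iff₀ (by positivity) (by positivity)]
      have hw3 : (Real.sqrt 2)^3 ≤ 3 := by nlinarith [hw, hw15, hw0.le]
      have hD : (0:ℝ) < R^3 * q^3 := by positivity
      have h7 := mul_le_mul_of_nonneg_right hw3
        (by positivity : (0:ℝ) ≤ 640 * C^2 * (R^3 * q^3))
      have h8 : (0:ℝ) ≤ C^2 * (R^3 * q^3) := by positivity
      nlinarith [h7, h8]
    calc hb * (∑' m : ℤ × ℤ, (if R ≤ nrm2 (toR2 m - hb⁻¹ • ξ₀) then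
            ‖g (q • (toR2 m - hb⁻¹ • ξ₀))‖ ^ 2 else 0))
        ≤ hb * (∑' m : ℤ × ℤ, P m) := mul_le_mul_of_nonneg_left hle1 h0.le
      _ ≤ hb * (C^2 * ((32 * hb⁻¹^2 / S^3) * (10 / q) + (10 / q) * (32 * hb⁻¹^2 / S^3))) :=
          mul_le_mul_of_nonneg_left hsum_le h0.le
      _ ≤ 3000 * C^2 * ((R * q)^3)⁻¹ := harith
  refine squeeze_zero' hnonneg hbound ?_
  have h4 : Tendsto (fun hb => (r hb * Real.sqrt hb)^3) (𝓝[>] (0:ℝ)) atTop :=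
    (tendsto_pow_atTop (by norm_num : (3:ℕ) ≠ 0)).comp hrinf
  have h5 := h4.inv_tendsto_atTop
  have h6 := h5.const_mul (3000 * C^2)
  simpa using h6
end
end

section
/- Let g : ℝ² → ℂ satisfy |g(ξ)| ≤ C (1 + ‖ξ‖²)^{−2} for some C > 0, let ξ₀ ∈ ℝ², and let (r_ħ)_{ħ∈(0,1]} be positive numbers with r_ħ ħ^{1/2} → +∞ as ħ → 0⁺. Then ħ Σ_{m ∈ ℤ², ‖m − ξ₀/ħ‖ ≥ r_ħ} |g(ħ^{1/2}(m − ξ₀/ħ))| → 0 as ħ → 0⁺; equivalently, the tail sum Σ_{‖m − ξ₀/ħ‖ ≥ r_ħ} ħ^{1/2} |g(ħ^{1/2}(m − ξ₀/ħ))| is o(ħ^{−1/2}). -/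
/-
Write `v = m - ξ₀/ħ`. The decay hypothesis gives `‖g(√ħ v)‖ ≤ C φ(v₁) φ(v₂)` with
`φ(t) = (1 + ħ t²)⁻¹`, and `‖v‖ ≥ R` forces `|v₁| ≥ R/2` or `|v₂| ≥ R/2`, so the tail over `ℤ²`
is dominated by products of one-dimensional lattice sums. Comparing these with telescoping series
gives, uniformly in the centre `c`, `∑ₙ φ(n - c) ≤ 8 ħ^{-1/2}` and
`∑_{|n - c| ≥ ρ} φ(n - c) ≤ 2 ħ⁻¹ (ρ⁻² + ρ⁻¹)`. Hence `ħ` times the tail is at most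
`32 C (w² + w)` with `w = 2 / (R √ħ)`, which tends to `0` when `R √ħ → ∞`.
-/

open MeasureTheory Filter Real
open scoped Topology

noncomputable section

lemma sum_range_succ_inv_sq_add_mul_le {a s : ℝ} (ha : 0 < a) (hs : 0 < s) (n : ℕ) :
    ∑ k ∈ Finset.range (n + 1), ((a + s * k) ^ 2)⁻¹
      ≤ (a ^ 2)⁻¹ + (s * a)⁻¹ - (s * (a + s * n))⁻¹ := by
  induction n with
  | zero => simp
  | succ n ih =>
    have hx : 0 < a + s * n := by positivity
    have htel : ((a + s * (n + 1)) ^ 2)⁻¹ ≤ (s * (a + s * n))⁻¹ - (s * (a + s * (n + 1)))⁻¹ := by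
      rw [show (s * (a + s * n))⁻¹ - (s * (a + s * (n + 1)))⁻¹
          = ((a + s * n) * (a + s * (n + 1)))⁻¹ by field_simp; ring]
      exact inv_anti₀ (by positivity) (by nlinarith)
    rw [Finset.sum_range_succ]
    push_cast at ih ⊢
    linarith

lemma summable_and_tsum_inv_sq_add_mul_le {a s : ℝ} (ha : 0 < a) (hs : 0 < s) :
    Summable (fun k : ℕ => ((a + s * k) ^ 2)⁻¹) ∧
      ∑' k : ℕ, ((a + s * k) ^ 2)⁻¹ ≤ (a ^ 2)⁻¹ + (s * a)⁻¹ := by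
  have hsum : ∀ n, ∑ k ∈ Finset.range n, ((a + s * k) ^ 2)⁻¹ ≤ (a ^ 2)⁻¹ + (s * a)⁻¹ := by
    intro n
    calc ∑ k ∈ Finset.range n, ((a + s * k) ^ 2)⁻¹
        ≤ ∑ k ∈ Finset.range (n + 1), ((a + s * k) ^ 2)⁻¹ :=
          Finset.sum_le_sum_of_subset_of_nonneg (by simp) fun _ _ _ => by positivity
      _ ≤ (a ^ 2)⁻¹ + (s * a)⁻¹ - (s * (a + s * n))⁻¹ :=
          sum_range_succ_inv_sq_add_mul_le ha hs n
      _ ≤ (a ^ 2)⁻¹ + (s * a)⁻¹ := sub_le_self _ (by positivity)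
  exact ⟨summable_of_sum_range_le (fun _ => by positivity) hsum,
    Real.tsum_le_of_sum_range_le (fun _ => by positivity) hsum⟩

section HalfLine

variable {φ : ℝ → ℝ} {ρ : ℝ}

lemma summable_and_tsum_ite_le_of_antitoneOn (hφ : AntitoneOn φ (Set.Ici ρ))
    (hφ0 : ∀ t, ρ ≤ t → 0 ≤ φ t) (hs : Summable fun k : ℕ => φ (ρ + k)) (c : ℝ) :
    Summable (fun n : ℤ => if ρ ≤ n - c then φ (n - c) else 0) ∧
      ∑' n : ℤ, (if ρ ≤ n - c then φ (n - c) else 0) ≤ ∑' k : ℕ, φ (ρ + k) := by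
  set F : ℤ → ℝ := fun n => if ρ ≤ n - c then φ (n - c) else 0
  set e : ℕ → ℤ := fun k => ⌈c + ρ⌉ + k
  have he : Function.Injective e := fun k l hkl => by simpa [e] using hkl
  have hsupp : Function.support F ⊆ Set.range e := by
    intro n hn
    have hρn : ρ ≤ n - c := by by_contra h; exact hn (if_neg h)
    have : ⌈c + ρ⌉ ≤ n := Int.ceil_le.2 (by linarith)
    exact ⟨(n - ⌈c + ρ⌉).toNat, by simp [e, Int.toNat_of_nonneg (sub_nonneg.2 this)]⟩
  have hF0 : ∀ n, 0 ≤ F n := fun n => by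
    simp only [F]; split_ifs with h
    exacts [hφ0 _ h, le_rfl]
  have hle : ∀ k : ℕ, F (e k) ≤ φ (ρ + k) := fun k => by
    have hk : ρ + k ≤ e k - c := by
      have := Int.le_ceil (c + ρ); push_cast [e]; linarith
    simp only [F]; split_ifs with h
    · exact hφ (by simp) (by simp; linarith) hk
    · exact hφ0 _ (by simp)
  have hsF : Summable (F ∘ e) := hs.of_nonneg_of_le (fun k => hF0 _) hle
  refine ⟨(he.summable_iff fun n hn => ?_).1 hsF, ?_⟩
  · by_contra h; exact hn (hsupp h)
  · rw [← he.tsum_eq hsupp]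
    exact hsF.tsum_le_tsum hle hs

lemma summable_and_tsum_ite_abs_le_of_antitoneOn (hφ : AntitoneOn φ (Set.Ici ρ))
    (hφ0 : ∀ t, ρ ≤ t → 0 ≤ φ t) (hs : Summable fun k : ℕ => φ (ρ + k)) (c : ℝ) :
    Summable (fun n : ℤ => if ρ ≤ |n - c| then φ |n - c| else 0) ∧
      ∑' n : ℤ, (if ρ ≤ |n - c| then φ |n - c| else 0) ≤ 2 * ∑' k : ℕ, φ (ρ + k) := by
  obtain ⟨hs₁, hb₁⟩ := summable_and_tsum_ite_le_of_antitoneOn hφ hφ0 hs c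
  obtain ⟨hs₂, hb₂⟩ := summable_and_tsum_ite_le_of_antitoneOn hφ hφ0 hs (-c)
  set F₁ : ℤ → ℝ := fun n => if ρ ≤ n - c then φ (n - c) else 0
  set F₂ : ℤ → ℝ := fun n => if ρ ≤ n - -c then φ (n - -c) else 0
  have hs₂' : Summable fun n => F₂ (-n) := (Equiv.neg ℤ).summable_iff.2 hs₂
  have hb₂' : ∑' n, F₂ (-n) = ∑' n, F₂ n := (Equiv.neg ℤ).tsum_eq F₂
  have hle : ∀ n : ℤ, (if ρ ≤ |n - c| then φ |n - c| else 0) ≤ F₁ n + F₂ (-n) := by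
    intro n
    have h₁ : 0 ≤ F₁ n := by simp only [F₁]; split_ifs with h; exacts [hφ0 _ h, le_rfl]
    have h₂ : 0 ≤ F₂ (-n) := by simp only [F₂]; split_ifs with h; exacts [hφ0 _ h, le_rfl]
    split_ifs with h
    · rcases le_or_gt 0 ((n : ℝ) - c) with hx | hx
      · rw [abs_of_nonneg hx] at h ⊢
        simp only [F₁, if_pos h]
        linarith
      · have e : ((-n : ℤ) : ℝ) - -c = |n - c| := by
          rw [abs_of_neg hx]; push_cast; ring
        simp only [F₂, e, if_pos h]
        linarith
    · exact add_nonneg h₁ h₂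
  have hsum : Summable fun n => F₁ n + F₂ (-n) := hs₁.add hs₂'
  have hsF : Summable fun n : ℤ => if ρ ≤ |n - c| then φ |n - c| else 0 :=
    hsum.of_nonneg_of_le (fun n => by split_ifs with h; exacts [hφ0 _ h, le_rfl]) hle
  refine ⟨hsF, ?_⟩
  calc ∑' n : ℤ, (if ρ ≤ |n - c| then φ |n - c| else 0)
      ≤ ∑' n, (F₁ n + F₂ (-n)) := hsF.tsum_le_tsum hle hsum
    _ = ∑' n, F₁ n + ∑' n, F₂ n := by rw [hs₁.tsum_add hs₂', hb₂']
    _ ≤ 2 * ∑' k : ℕ, φ (ρ + k) := by linarith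

end HalfLine

lemma antitoneOn_inv_one_add_mul_sq {h : ℝ} (hh : 0 ≤ h) :
    AntitoneOn (fun t : ℝ => (1 + h * t ^ 2)⁻¹) (Set.Ici 0) := by
  intro x hx y _ hxy
  have : x ^ 2 ≤ y ^ 2 := pow_le_pow_left₀ hx hxy 2
  exact inv_anti₀ (by positivity) (by gcongr)

lemma summable_and_tsum_inv_one_add_mul_sq_le {h : ℝ} (h0 : 0 < h) (h1 : h ≤ 1) (c : ℝ) :
    Summable (fun n : ℤ => (1 + h * (n - c) ^ 2)⁻¹) ∧
      ∑' n : ℤ, (1 + h * (n - c) ^ 2)⁻¹ ≤ 8 / √h := by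
  have hs : 0 < √h := sqrt_pos.2 h0
  have hs1 : √h ≤ 1 := sqrt_le_one.2 h1
  obtain ⟨hsum, hbound⟩ := summable_and_tsum_inv_sq_add_mul_le one_pos hs
  -- `(1 + √h k)² ≤ 2 (1 + h k²)` by AM-GM
  have hle : ∀ k : ℕ, (1 + h * ((0 : ℝ) + k) ^ 2)⁻¹ ≤ 2 * ((1 + √h * k) ^ 2)⁻¹ := fun k => by
    rw [← inv_inv (2 : ℝ), ← mul_inv, zero_add]
    refine inv_anti₀ (by positivity) ?_
    nlinarith [sq_nonneg (1 - √h * k), sq_sqrt h0.le]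
  have hsum' := hsum.mul_left 2
  have hsφ := hsum'.of_nonneg_of_le (fun _ => by positivity) hle
  obtain ⟨hsZ, hbZ⟩ := summable_and_tsum_ite_abs_le_of_antitoneOn
    (antitoneOn_inv_one_add_mul_sq h0.le) (fun _ _ => by positivity) hsφ c
  simp only [abs_nonneg, if_true, sq_abs] at hsZ hbZ
  refine ⟨hsZ, hbZ.trans ?_⟩
  have hinv : 1 ≤ (√h)⁻¹ := one_le_inv₀ hs |>.2 hs1
  calc 2 * ∑' k : ℕ, (1 + h * ((0 : ℝ) + k) ^ 2)⁻¹
      ≤ 2 * ∑' k : ℕ, 2 * ((1 + √h * k) ^ 2)⁻¹ := by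
        gcongr 2 * ?_; exact hsφ.tsum_le_tsum hle hsum'
    _ ≤ 2 * (2 * ((1 ^ 2)⁻¹ + (√h * 1)⁻¹)) := by rw [tsum_mul_left]; gcongr
    _ ≤ 8 / √h := by rw [div_eq_mul_inv]; simp only [one_pow, inv_one, mul_one]; linarith

lemma summable_and_tsum_ite_inv_one_add_mul_sq_le {h ρ : ℝ} (h0 : 0 < h) (hρ : 0 < ρ) (c : ℝ) :
    Summable (fun n : ℤ => if ρ ≤ |n - c| then (1 + h * (n - c) ^ 2)⁻¹ else 0) ∧
      ∑' n : ℤ, (if ρ ≤ |n - c| then (1 + h * (n - c) ^ 2)⁻¹ else 0)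
        ≤ 2 * h⁻¹ * ((ρ ^ 2)⁻¹ + ρ⁻¹) := by
  obtain ⟨hsum, hbound⟩ := summable_and_tsum_inv_sq_add_mul_le hρ one_pos
  simp only [one_mul] at hsum hbound
  have hle : ∀ k : ℕ, (1 + h * (ρ + k) ^ 2)⁻¹ ≤ h⁻¹ * ((ρ + k) ^ 2)⁻¹ := fun k => by
    rw [← mul_inv]
    exact inv_anti₀ (by positivity) (by linarith)
  have hsum' := hsum.mul_left h⁻¹
  have hsφ := hsum'.of_nonneg_of_le (fun _ => by positivity) hle
  obtain ⟨hsZ, hbZ⟩ := summable_and_tsum_ite_abs_le_of_antitoneOn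
    ((antitoneOn_inv_one_add_mul_sq h0.le).mono (Set.Ici_subset_Ici.2 hρ.le))
    (fun _ _ => by positivity) hsφ c
  simp only [sq_abs] at hsZ hbZ
  refine ⟨hsZ, hbZ.trans ?_⟩
  calc 2 * ∑' k : ℕ, (1 + h * (ρ + k) ^ 2)⁻¹
      ≤ 2 * ∑' k : ℕ, h⁻¹ * ((ρ + k) ^ 2)⁻¹ := by
        gcongr 2 * ?_; exact hsφ.tsum_le_tsum hle hsum'
    _ ≤ 2 * h⁻¹ * ((ρ ^ 2)⁻¹ + ρ⁻¹) := by
        rw [tsum_mul_left, mul_assoc]; gcongr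

lemma nrm2_sq (v : ℝ × ℝ) : nrm2 v ^ 2 = v.1 ^ 2 + v.2 ^ 2 := by
  rw [nrm2, dot2, sq_sqrt (add_nonneg (mul_self_nonneg _) (mul_self_nonneg _))]
  ring

lemma half_le_abs_fst_or_half_le_abs_snd {R : ℝ} {v : ℝ × ℝ} (hR : R ≤ nrm2 v) :
    R / 2 ≤ |v.1| ∨ R / 2 ≤ |v.2| := by
  by_contra! hlt
  have hR0 : 0 ≤ R := by linarith [abs_nonneg v.1, hlt.1]
  have := pow_le_pow_left₀ hR0 hR 2
  rw [nrm2_sq] at this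
  nlinarith [sq_abs v.1, sq_abs v.2, abs_nonneg v.1, abs_nonneg v.2]

lemma div_one_add_mul_sq_sq_le {h C : ℝ} (hh : 0 ≤ h) (hC : 0 ≤ C) (a b : ℝ) :
    C / (1 + h * (a ^ 2 + b ^ 2)) ^ 2 ≤ C * ((1 + h * a ^ 2)⁻¹ * (1 + h * b ^ 2)⁻¹) := by
  rw [div_eq_mul_inv, ← mul_inv]
  gcongr
  nlinarith [mul_nonneg (mul_nonneg hh (sq_nonneg a)) (mul_nonneg hh (sq_nonneg b)),
    mul_nonneg hh (sq_nonneg a), mul_nonneg hh (sq_nonneg b)]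

lemma ite_norm_le_of_decay {g : ℝ × ℝ → ℂ} {C : ℝ} (hC : 0 ≤ C)
    (hg : ∀ ξ : ℝ × ℝ, ‖g ξ‖ ≤ C / (1 + nrm2 ξ ^ 2) ^ 2) {h : ℝ} (hh : 0 ≤ h) (R : ℝ)
    (v : ℝ × ℝ) :
    (if R ≤ nrm2 v then ‖g (√h • v)‖ else 0)
      ≤ C * ((if R / 2 ≤ |v.1| then (1 + h * v.1 ^ 2)⁻¹ else 0) * (1 + h * v.2 ^ 2)⁻¹
        + (1 + h * v.1 ^ 2)⁻¹ * (if R / 2 ≤ |v.2| then (1 + h * v.2 ^ 2)⁻¹ else 0)) := by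
  have hite : ∀ x : ℝ, 0 ≤ if R / 2 ≤ |x| then (1 + h * x ^ 2)⁻¹ else 0 := fun x => by
    split_ifs <;> positivity
  have hA : 0 ≤ (1 + h * v.1 ^ 2)⁻¹ := by positivity
  have hB : 0 ≤ (1 + h * v.2 ^ 2)⁻¹ := by positivity
  by_cases hR : R ≤ nrm2 v
  · have hdecay : ‖g (√h • v)‖ ≤ C * ((1 + h * v.1 ^ 2)⁻¹ * (1 + h * v.2 ^ 2)⁻¹) := by
      refine (hg _).trans ?_
      rw [nrm2_sq, Prod.smul_fst, Prod.smul_snd, smul_eq_mul, smul_eq_mul, mul_pow, mul_pow,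
        sq_sqrt hh, ← mul_add]
      exact div_one_add_mul_sq_sq_le hh hC _ _
    rw [if_pos hR]
    refine hdecay.trans (mul_le_mul_of_nonneg_left ?_ hC)
    rcases half_le_abs_fst_or_half_le_abs_snd hR with h1 | h2
    · rw [if_pos h1]
      exact le_add_of_nonneg_right (mul_nonneg hA (hite _))
    · rw [if_pos h2]
      exact le_add_of_nonneg_left (mul_nonneg (hite _) hB)
  · rw [if_neg hR]
    exact mul_nonneg hC (add_nonneg (mul_nonneg (hite _) hB) (mul_nonneg hA (hite _)))

lemma mul_tsum_ite_norm_le {g : ℝ × ℝ → ℂ} {C : ℝ} (hC : 0 ≤ C)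
    (hg : ∀ ξ : ℝ × ℝ, ‖g ξ‖ ≤ C / (1 + nrm2 ξ ^ 2) ^ 2) {h R : ℝ} (h0 : 0 < h) (h1 : h ≤ 1)
    (hR : 0 < R) (c : ℝ × ℝ) :
    h * ∑' m : ℤ × ℤ, (if R ≤ nrm2 (toR2 m - c) then ‖g (√h • (toR2 m - c))‖ else 0)
      ≤ 32 * C * ((2 / (R * √h)) ^ 2 + 2 / (R * √h)) := by
  set U : ℝ → ℤ → ℝ := fun x n => if R / 2 ≤ |n - x| then (1 + h * (n - x) ^ 2)⁻¹ else 0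
  set V : ℝ → ℤ → ℝ := fun x n => (1 + h * (n - x) ^ 2)⁻¹
  have hU0 : ∀ x, 0 ≤ U x := fun x n => by simp only [U]; split_ifs <;> positivity
  have hV0 : ∀ x, 0 ≤ V x := fun x n => by positivity
  obtain ⟨hU₁, hbU₁⟩ := summable_and_tsum_ite_inv_one_add_mul_sq_le h0 (half_pos hR) c.1
  obtain ⟨hU₂, hbU₂⟩ := summable_and_tsum_ite_inv_one_add_mul_sq_le h0 (half_pos hR) c.2
  obtain ⟨hV₁, hbV₁⟩ := summable_and_tsum_inv_one_add_mul_sq_le h0 h1 c.1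
  obtain ⟨hV₂, hbV₂⟩ := summable_and_tsum_inv_one_add_mul_sq_le h0 h1 c.2
  have hP₁ := hU₁.mul_of_nonneg hV₂ (hU0 c.1) (hV0 c.2)
  have hP₂ := hV₁.mul_of_nonneg hU₂ (hV0 c.1) (hU0 c.2)
  have hM := (hP₁.add hP₂).mul_left C
  have hle : ∀ m : ℤ × ℤ, (if R ≤ nrm2 (toR2 m - c) then ‖g (√h • (toR2 m - c))‖ else 0)
      ≤ C * (U c.1 m.1 * V c.2 m.2 + V c.1 m.1 * U c.2 m.2) :=
    fun m => ite_norm_le_of_decay hC hg h0.le R (toR2 m - c)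
  have hsum : ∑' m : ℤ × ℤ, (if R ≤ nrm2 (toR2 m - c) then ‖g (√h • (toR2 m - c))‖ else 0)
      ≤ C * ((∑' n, U c.1 n) * (∑' n, V c.2 n) + (∑' n, V c.1 n) * (∑' n, U c.2 n)) := by
    rw [hU₁.tsum_mul_tsum hV₂ hP₁, hV₁.tsum_mul_tsum hU₂ hP₂, ← hP₁.tsum_add hP₂, ← tsum_mul_left]
    exact (hM.of_nonneg_of_le (fun m => by split_ifs <;> positivity) hle).tsum_le_tsum hle hM
  have hs : 0 < √h := sqrt_pos.2 h0
  have hprod : (∑' n, U c.1 n) * (∑' n, V c.2 n) + (∑' n, V c.1 n) * (∑' n, U c.2 n)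
      ≤ 2 * ((2 * h⁻¹ * (((R / 2) ^ 2)⁻¹ + (R / 2)⁻¹)) * (8 / √h)) := by
    have := mul_le_mul hbU₁ hbV₂ (tsum_nonneg (hV0 c.2)) (by positivity)
    have := mul_le_mul hbV₁ hbU₂ (tsum_nonneg (hU0 c.2)) (by positivity)
    linarith
  have hw : ((R / 2) ^ 2)⁻¹ / √h ≤ (2 / (R * √h)) ^ 2 := by
    rw [show ((R / 2) ^ 2)⁻¹ / √h = (2 / (R * √h)) ^ 2 * √h by field_simp]
    exact mul_le_of_le_one_right (by positivity) (sqrt_le_one.2 h1)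
  calc h * ∑' m : ℤ × ℤ, (if R ≤ nrm2 (toR2 m - c) then ‖g (√h • (toR2 m - c))‖ else 0)
      ≤ h * (C * (2 * ((2 * h⁻¹ * (((R / 2) ^ 2)⁻¹ + (R / 2)⁻¹)) * (8 / √h)))) := by
        gcongr; exact hsum.trans (by gcongr)
    _ = 32 * C * (((R / 2) ^ 2)⁻¹ / √h + 2 / (R * √h)) := by field_simp; ring
    _ ≤ 32 * C * ((2 / (R * √h)) ^ 2 + 2 / (R * √h)) := by gcongr

theorem stmt10_general
    (g : ℝ × ℝ → ℂ) (C : ℝ) (hC : 0 < C)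
    (hg : ∀ ξ : ℝ × ℝ, ‖g ξ‖ ≤ C / (1 + nrm2 ξ ^ 2) ^ 2)
    (ξ₀ : ℝ × ℝ) (r : ℝ → ℝ)
    (hrinf : Tendsto (fun hb => r hb * Real.sqrt hb) (𝓝[>] (0:ℝ)) atTop) :
    Tendsto
      (fun hb => hb * ∑' m : ℤ × ℤ,
        if r hb ≤ nrm2 (toR2 m - hb⁻¹ • ξ₀) then
          ‖g (Real.sqrt hb • (toR2 m - hb⁻¹ • ξ₀))‖ else 0)
      (𝓝[>] (0:ℝ)) (𝓝 0) := by
  have hw : Tendsto (fun hb => 2 / (r hb * √hb)) (𝓝[>] 0) (𝓝 0) := by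
    simpa [div_eq_mul_inv] using hrinf.inv_tendsto_atTop.const_mul 2
  have hbound : Tendsto (fun hb => 32 * C * ((2 / (r hb * √hb)) ^ 2 + 2 / (r hb * √hb)))
      (𝓝[>] 0) (𝓝 0) := by
    simpa using ((hw.pow 2).add hw).const_mul (32 * C)
  have hsmall : ∀ᶠ hb in 𝓝[>] (0 : ℝ), hb ∈ Set.Ioc 0 1 ∧ 0 < r hb := by
    filter_upwards [Ioc_mem_nhdsGT one_pos, hrinf.eventually_gt_atTop 0] with hb hmem hrb
    exact ⟨hmem, pos_of_mul_pos_left hrb (sqrt_nonneg hb)⟩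
  refine squeeze_zero' ?_ ?_ hbound
  · filter_upwards [hsmall] with hb hhb
    exact mul_nonneg hhb.1.1.le (tsum_nonneg fun m => by split_ifs <;> positivity)
  · filter_upwards [hsmall] with hb hhb
    exact mul_tsum_ite_norm_le hC.le hg hhb.1.1 hhb.1.2 hhb.2 _

/-- linear tail bound for the rescaled lattice sums outside balls of
radii `r_hb ≫ hb^{-1/2}` centered at `ξ₀/hb`; equivalently the tail sum
`Σ_{‖m - ξ₀/hb‖ ≥ r_hb} hb^{1/2} |g(hb^{1/2}(m - ξ₀/hb))|` is `o(hb^{-1/2})`. -/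
theorem stmt10
    (g : ℝ × ℝ → ℂ) (C : ℝ) (hC : 0 < C)
    (hg : ∀ ξ : ℝ × ℝ, ‖g ξ‖ ≤ C / (1 + nrm2 ξ ^ 2) ^ 2)
    (ξ₀ : ℝ × ℝ) (r : ℝ → ℝ) (hr : ∀ hb ∈ Set.Ioc (0:ℝ) 1, 0 < r hb)
    (hrinf : Tendsto (fun hb => r hb * Real.sqrt hb) (𝓝[>] (0:ℝ)) atTop) :
    Tendsto
      (fun hb => hb * ∑' m : ℤ × ℤ,
        if r hb ≤ nrm2 (toR2 m - hb⁻¹ • ξ₀) then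
          ‖g (Real.sqrt hb • (toR2 m - hb⁻¹ • ξ₀))‖ else 0)
      (𝓝[>] (0:ℝ)) (𝓝 0) :=
  stmt10_general g C hC hg ξ₀ r hrinf
end
end

section
/- Let w ∈ ℝ² be a unit vector, ξ₀ ∈ ℝ², C₀, C > 0, and let (ε_ħ)_{ħ∈(0,1]} be positive numbers with ε_ħ ħ^{−3/2} → 0 and ε_ħ ħ^{−2} → ∞ as ħ → 0⁺. Then ħ Σ_{m ∈ ℤ², |⟨m − ξ₀/ħ, w⟩| ≤ C₀ ħ^{−2} ε_ħ} (1 + ‖ħ^{1/2}(m − ξ₀/ħ)‖²)^{−2} → 0 as ħ → 0⁺. -/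
/-!
Write `y = m - ξ₀/ħ`, `s = ⟨y, w⟩` and `u = ⟨y, w⊥⟩`, so that `|y|² = s² + u²`. A cell
`⌊2s⌋ = j, ⌊2u⌋ = k` of side `1/2` contains at most one lattice point, since two points in it are
at distance `< 1`. The strip `|s| ≤ T` meets only `4T + 2` columns `j`, and in the cell `(j, k)`
the weight is at most `(1 + ħ d_k²)⁻²`, where `d_k` is the distance from `0` to `[k/2, (k+1)/2]`;
the sum of these over `k ∈ ℤ` is `O(ħ^{-1/2})`. Hence the lattice sum is `O((T + 1) ħ^{-1/2})`,
and for `T = C₀ ε_ħ / ħ²` the rescaled sum is `O(ε_ħ ħ^{-3/2} + ħ^{1/2}) → 0`.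
-/

open MeasureTheory Filter Real
open scoped Topology

noncomputable section

open scoped ENNReal
open Finset

theorem ENNReal.tsum_le_tsum_mul_tsum_of_injective {α β γ : Type*} {f : α → ℝ≥0∞}
    {g : β → ℝ≥0∞} {h : γ → ℝ≥0∞} {φ : α → β × γ} (hφ : Function.Injective φ)
    (hf : ∀ x, f x ≤ g (φ x).1 * h (φ x).2) :
    ∑' x, f x ≤ (∑' y, g y) * ∑' z, h z :=
  calc ∑' x, f x ≤ ∑' x, g (φ x).1 * h (φ x).2 := ENNReal.tsum_le_tsum hf
    _ ≤ ∑' p : β × γ, g p.1 * h p.2 :=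
        ENNReal.tsum_comp_le_tsum_of_injective hφ fun p => g p.1 * h p.2
    _ = (∑' y, g y) * ∑' z, h z := by
        rw [ENNReal.tsum_prod']
        simp only [ENNReal.tsum_mul_left, ENNReal.tsum_mul_right]

lemma tsum_le_of_tsum_ofReal_le {α : Type*} {f : α → ℝ} {B : ℝ} (hf : ∀ x, 0 ≤ f x)
    (hB : 0 ≤ B) (h : ∑' x, ENNReal.ofReal (f x) ≤ ENNReal.ofReal B) : ∑' x, f x ≤ B := by
  have hsum : ∑' x, f x = (∑' x, ENNReal.ofReal (f x)).toReal := by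
    rw [ENNReal.tsum_toReal_eq fun _ => ENNReal.ofReal_ne_top]
    exact tsum_congr fun x => (ENNReal.toReal_ofReal (hf x)).symm
  exact hsum ▸ ENNReal.toReal_le_of_le_ofReal hB h

lemma tsum_ite_mem_Icc_ceil_floor_le {x y : ℝ} (hxy : x ≤ y + 1) :
    ∑' j : ℤ, (if j ∈ Icc ⌈x⌉ ⌊y⌋ then 1 else 0 : ℝ≥0∞) ≤ ENNReal.ofReal (y - x + 1) := by
  rw [tsum_eq_sum (s := Icc ⌈x⌉ ⌊y⌋) fun j hj => if_neg hj, sum_ite_mem, inter_self,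
    sum_const, nsmul_one, ← ENNReal.ofReal_natCast, Int.card_Icc]
  refine ENNReal.ofReal_le_ofReal ?_
  rw [← Int.cast_natCast, Int.toNat_eq_max]
  push_cast
  refine max_le ?_ (by linarith)
  linarith [Int.floor_le y, Int.le_ceil x]

lemma min_sq_floor_le_sq (u : ℝ) : min ((⌊u⌋ : ℝ) ^ 2) (((⌊u⌋ : ℝ) + 1) ^ 2) ≤ u ^ 2 := by
  rcases le_or_gt 0 ⌊u⌋ with h | h
  · have h0 : (0 : ℝ) ≤ ⌊u⌋ := by exact_mod_cast h
    exact (min_le_left _ _).trans (pow_le_pow_left₀ h0 (Int.floor_le u) 2)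
  · have h1 : (⌊u⌋ : ℝ) + 1 ≤ 0 := by
      have : (⌊u⌋ : ℝ) ≤ -1 := by exact_mod_cast Int.le_sub_one_of_lt h
      linarith
    have := Int.lt_floor_add_one u
    exact (min_le_right _ _).trans (by nlinarith)

section LorentzianSums

variable {b : ℝ}

lemma inv_one_add_sq_sq_le_div_mul_sub_inv (hb0 : 0 < b) (hb1 : b ≤ 1) {x : ℝ} (hx : 0 ≤ x) :
    ((1 + b ^ 2 * x ^ 2) ^ 2)⁻¹ ≤ 4 / b * ((1 + b * x)⁻¹ - (1 + b * (x + 1))⁻¹) := by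
  have hbx : 0 ≤ b * x := by positivity
  have htelescope : 4 / b * ((1 + b * x)⁻¹ - (1 + b * (x + 1))⁻¹)
      = 4 / ((1 + b * x) * (1 + b * x + b)) := by
    field_simp
    ring
  rw [htelescope, ← one_div, div_le_div_iff₀ (by positivity) (by positivity)]
  nlinarith [sq_nonneg (b * x - 1), mul_nonneg hbx hbx, mul_nonneg (mul_nonneg hbx hbx) hbx]

lemma sum_range_inv_one_add_sq_sq_le (hb0 : 0 < b) (hb1 : b ≤ 1) (n : ℕ) :
    ∑ i ∈ range n, ((1 + b ^ 2 * (i : ℝ) ^ 2) ^ 2)⁻¹ ≤ 4 / b := by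
  set g : ℕ → ℝ := fun i => (1 + b * i)⁻¹
  calc ∑ i ∈ range n, ((1 + b ^ 2 * (i : ℝ) ^ 2) ^ 2)⁻¹
      ≤ ∑ i ∈ range n, 4 / b * (g i - g (i + 1)) :=
        sum_le_sum fun i _ => by
          simpa [g] using inv_one_add_sq_sq_le_div_mul_sub_inv hb0 hb1 (Nat.cast_nonneg i)
    _ = 4 / b * (1 - g n) := by rw [← mul_sum, sum_range_sub']; simp [g]
    _ ≤ 4 / b := mul_le_of_le_one_right (by positivity) (sub_le_self _ (by positivity))

lemma tsum_nat_ofReal_inv_one_add_sq_sq_le (hb0 : 0 < b) (hb1 : b ≤ 1) :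
    ∑' n : ℕ, ENNReal.ofReal ((1 + b ^ 2 * (n : ℝ) ^ 2) ^ 2)⁻¹ ≤ ENNReal.ofReal (4 / b) :=
  ENNReal.tsum_le_of_sum_range_le fun n => by
    rw [← ENNReal.ofReal_sum_of_nonneg fun i _ => by positivity]
    exact ENNReal.ofReal_le_ofReal (sum_range_inv_one_add_sq_sq_le hb0 hb1 n)

lemma tsum_int_ofReal_inv_one_add_min_sq_sq_le (hb0 : 0 < b) (hb1 : b ≤ 1) :
    ∑' k : ℤ, ENNReal.ofReal ((1 + b ^ 2 * min ((k : ℝ) ^ 2) (((k : ℝ) + 1) ^ 2)) ^ 2)⁻¹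
      ≤ ENNReal.ofReal (8 / b) := by
  rw [tsum_of_nat_of_neg_add_one ENNReal.summable ENNReal.summable]
  have hmin_nat (n : ℕ) : min ((n : ℝ) ^ 2) (((n : ℝ) + 1) ^ 2) = (n : ℝ) ^ 2 :=
    min_eq_left (by nlinarith [(n.cast_nonneg : (0 : ℝ) ≤ n)])
  have hmin_neg (n : ℕ) : min (((-(n + 1) : ℤ) : ℝ) ^ 2) ((((-(n + 1) : ℤ) : ℝ) + 1) ^ 2)
      = (n : ℝ) ^ 2 := by
    push_cast
    rw [min_eq_right (by nlinarith [(n.cast_nonneg : (0 : ℝ) ≤ n)])]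
    ring
  simp only [Int.cast_natCast, hmin_nat, hmin_neg]
  calc _ ≤ ENNReal.ofReal (4 / b) + ENNReal.ofReal (4 / b) :=
        add_le_add (tsum_nat_ofReal_inv_one_add_sq_sq_le hb0 hb1)
          (tsum_nat_ofReal_inv_one_add_sq_sq_le hb0 hb1)
    _ = ENNReal.ofReal (8 / b) := by
        rw [← ENNReal.ofReal_add (by positivity) (by positivity)]; ring_nf

end LorentzianSums

lemma nrm2_sqrt_smul_sq {a : ℝ} (ha : 0 ≤ a) (y : ℝ × ℝ) :
    nrm2 (√a • y) ^ 2 = a * dot2 y y := by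
  have hnonneg : 0 ≤ dot2 (√a • y) (√a • y) := add_nonneg (mul_self_nonneg _) (mul_self_nonneg _)
  rw [nrm2, Real.sq_sqrt hnonneg]
  simp only [dot2, Prod.smul_fst, Prod.smul_snd, smul_eq_mul]
  linear_combination (y.1 ^ 2 + y.2 ^ 2) * Real.mul_self_sqrt ha

lemma dot2_self_eq_sq_add_sq (w y : ℝ × ℝ) (hw : dot2 w w = 1) :
    dot2 y y = dot2 y w ^ 2 + dot2 y (-w.2, w.1) ^ 2 := by
  simp only [dot2] at hw ⊢
  linear_combination -(y.1 ^ 2 + y.2 ^ 2) * hw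

lemma eq_of_dot2_sub_self_lt_one {m m' : ℤ × ℤ}
    (h : dot2 (toR2 m - toR2 m') (toR2 m - toR2 m') < 1) : m = m' := by
  simp only [dot2, toR2, Prod.fst_sub, Prod.snd_sub] at h
  have hZ : (m.1 - m'.1) * (m.1 - m'.1) + (m.2 - m'.2) * (m.2 - m'.2) < 1 := by
    exact_mod_cast h
  exact Prod.ext (by nlinarith) (by nlinarith)

lemma injective_floor_two_mul_dot2 {w : ℝ × ℝ} (hw : dot2 w w = 1) (c : ℝ × ℝ) :
    Function.Injective fun m : ℤ × ℤ =>
      (⌊2 * dot2 (toR2 m - c) w⌋, ⌊2 * dot2 (toR2 m - c) (-w.2, w.1)⌋) := by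
  intro m m' h
  obtain ⟨hs, hu⟩ := Prod.mk.inj h
  have hs' := abs_lt.1 (Int.abs_sub_lt_one_of_floor_eq_floor hs)
  have hu' := abs_lt.1 (Int.abs_sub_lt_one_of_floor_eq_floor hu)
  apply eq_of_dot2_sub_self_lt_one
  rw [dot2_self_eq_sq_add_sq w _ hw]
  simp only [dot2, toR2, Prod.fst_sub, Prod.snd_sub] at hs' hu' ⊢
  nlinarith

lemma tsum_strip_inv_one_add_sq_sq_le {w : ℝ × ℝ} (hw : dot2 w w = 1) (c : ℝ × ℝ)
    {a T : ℝ} (ha0 : 0 < a) (ha1 : a ≤ 1) (hT : 0 ≤ T) :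
    ∑' m : ℤ × ℤ, (if |dot2 (toR2 m - c) w| ≤ T then
        ((1 + a * dot2 (toR2 m - c) (toR2 m - c)) ^ 2)⁻¹ else 0)
      ≤ (4 * T + 2) * (16 / √a) := by
  -- cells of side `1/2`: `a u² = b² (2u)²`
  set b := √a / 2 with hb
  have hb0 : 0 < b := by positivity
  have hb1 : b ≤ 1 := by linarith [Real.sqrt_le_one.mpr ha1]
  have hba : b ^ 2 * 4 = a := by rw [hb, div_pow, Real.sq_sqrt ha0.le]; ring
  set J := Icc ⌈-2 * T - 1⌉ ⌊2 * T⌋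
  set A : ℤ → ℝ≥0∞ := fun j => if j ∈ J then 1 else 0
  set B : ℤ → ℝ≥0∞ := fun k =>
    ENNReal.ofReal ((1 + b ^ 2 * min ((k : ℝ) ^ 2) (((k : ℝ) + 1) ^ 2)) ^ 2)⁻¹
  have hA : ∑' j, A j ≤ ENNReal.ofReal (4 * T + 2) :=
    (tsum_ite_mem_Icc_ceil_floor_le (by linarith)).trans_eq (by ring_nf)
  have hB : ∑' k, B k ≤ ENNReal.ofReal (16 / √a) := by
    have := tsum_int_ofReal_inv_one_add_min_sq_sq_le hb0 hb1
    rwa [hb, div_div_eq_mul_div, show (8 : ℝ) * 2 = 16 by norm_num] at this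
  refine tsum_le_of_tsum_ofReal_le (fun m => by split_ifs <;> positivity) (by positivity) ?_
  calc _ ≤ (∑' j, A j) * ∑' k, B k := by
        refine ENNReal.tsum_le_tsum_mul_tsum_of_injective
          (injective_floor_two_mul_dot2 hw c) fun m => ?_
        set s := dot2 (toR2 m - c) w
        set u := dot2 (toR2 m - c) (-w.2, w.1)
        split_ifs with hs
        · have hJ : ⌊2 * s⌋ ∈ J := by
            have := abs_le.1 hs
            rw [mem_Icc, Int.ceil_le, Int.le_floor]
            constructor <;> linarith [Int.floor_le (2 * s), Int.lt_floor_add_one (2 * s)]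
          have hu := min_sq_floor_le_sq (2 * u)
          simp only [A, B, if_pos hJ, one_mul]
          refine ENNReal.ofReal_le_ofReal (inv_anti₀ (by positivity)
            (pow_le_pow_left₀ (by positivity) ?_ 2))
          rw [dot2_self_eq_sq_add_sq w _ hw]
          nlinarith [sq_nonneg s]
        · simp
    _ ≤ ENNReal.ofReal (4 * T + 2) * ENNReal.ofReal (16 / √a) := mul_le_mul' hA hB
    _ = ENNReal.ofReal ((4 * T + 2) * (16 / √a)) := (ENNReal.ofReal_mul (by positivity)).symm

theorem stmt13_general
    (w : ℝ × ℝ) (hw : nrm2 w = 1) (ξ₀ : ℝ × ℝ)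
    (C₀ : ℝ) (hC₀ : 0 < C₀)
    (ε : ℝ → ℝ) (hεpos : ∀ hb ∈ Set.Ioc (0:ℝ) 1, 0 < ε hb)
    (hε32 : Tendsto (fun hb => ε hb / hb ^ ((3:ℝ)/2)) (𝓝[>] (0:ℝ)) (𝓝 0)) :
    Tendsto
      (fun hb => hb * ∑' m : ℤ × ℤ,
        if |dot2 (toR2 m - hb⁻¹ • ξ₀) w| ≤ C₀ * ε hb / hb ^ 2 then
          ((1 + nrm2 (Real.sqrt hb • (toR2 m - hb⁻¹ • ξ₀)) ^ 2) ^ 2)⁻¹ else 0)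
      (𝓝[>] (0:ℝ)) (𝓝 0) := by
  have hw' : dot2 w w = 1 := Real.sqrt_eq_one.mp hw
  have hsqrt : Tendsto (fun hb : ℝ => √hb) (𝓝[>] 0) (𝓝 0) := by
    simpa using (Real.continuous_sqrt.tendsto 0).mono_left nhdsWithin_le_nhds
  have hbound := (hε32.const_mul (64 * C₀)).add (hsqrt.const_mul 32)
  rw [mul_zero, mul_zero, add_zero] at hbound
  refine tendsto_of_tendsto_of_tendsto_of_le_of_le' tendsto_const_nhds hbound ?_ ?_
  · filter_upwards [self_mem_nhdsWithin] with hb (hb0 : 0 < hb)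
    exact mul_nonneg hb0.le (tsum_nonneg fun m => by split_ifs <;> positivity)
  · filter_upwards [Ioo_mem_nhdsGT one_pos] with hb ⟨hb0, hb1⟩
    have hT : 0 ≤ C₀ * ε hb / hb ^ 2 := by have := hεpos hb ⟨hb0, hb1.le⟩; positivity
    have h32 : hb ^ ((3 : ℝ) / 2) = hb * √hb := by
      rw [show (3 : ℝ) / 2 = 1 + 1 / 2 by norm_num, Real.rpow_add hb0, Real.rpow_one,
        ← Real.sqrt_eq_rpow]
    simp_rw [nrm2_sqrt_smul_sq hb0.le]
    calc _ ≤ hb * ((4 * (C₀ * ε hb / hb ^ 2) + 2) * (16 / √hb)) :=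
          mul_le_mul_of_nonneg_left
            (tsum_strip_inv_one_add_sq_sq_le hw' _ hb0 hb1.le hT) hb0.le
      _ = 64 * C₀ * (ε hb / hb ^ ((3 : ℝ) / 2)) + 32 * √hb := by
          rw [h32]
          generalize ε hb = e
          set s := √hb
          have hs : 0 < s := Real.sqrt_pos.2 hb0
          rw [← Real.mul_self_sqrt hb0.le]
          field_simp
          ring

/-- vanishing of the rescaled lattice sum over the strip
`|⟨m - ξ₀/hb, w⟩| ≤ C₀ hb⁻² ε_hb` in the regime `hb² ≪ ε_hb ≪ hb^{3/2}`. -/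
theorem stmt13
    (w : ℝ × ℝ) (hw : nrm2 w = 1) (ξ₀ : ℝ × ℝ)
    (C₀ C : ℝ) (hC₀ : 0 < C₀) (hC : 0 < C)
    (ε : ℝ → ℝ) (hεpos : ∀ hb ∈ Set.Ioc (0:ℝ) 1, 0 < ε hb)
    (hε32 : Tendsto (fun hb => ε hb / hb ^ ((3:ℝ)/2)) (𝓝[>] (0:ℝ)) (𝓝 0))
    (hε2 : Tendsto (fun hb => ε hb / hb ^ 2) (𝓝[>] (0:ℝ)) atTop) :
    Tendsto
      (fun hb => hb * ∑' m : ℤ × ℤ,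
        if |dot2 (toR2 m - hb⁻¹ • ξ₀) w| ≤ C₀ * ε hb / hb ^ 2 then
          ((1 + nrm2 (Real.sqrt hb • (toR2 m - hb⁻¹ • ξ₀)) ^ 2) ^ 2)⁻¹ else 0)
      (𝓝[>] (0:ℝ)) (𝓝 0) :=
  stmt13_general w hw ξ₀ C₀ hC₀ ε hεpos hε32
end
end

section
/- Let d ≥ 1. There exists a constant C_d > 0, depending only on d, such that for every a : 𝕋^d × ℝ^d → ℂ which is continuous, bounded, and whose partial derivatives in x up to order d+1 exist, are continuous and uniformly bounded on 𝕋^d × ℝ^d, for every ħ ∈ (0,1] and every u ∈ ℓ²(ℤ^d), one has (Σ_{p∈ℤ^d} |Σ_{k∈ℤ^d} â(p − k, 2πħk) u_k|²)^{1/2} ≤ C_d (Σ_{|α| ≤ d+1} sup_{(x,ξ)∈𝕋^d×ℝ^d} |∂_x^α a(x, ξ)|) (Σ_{k∈ℤ^d} |u_k|²)^{1/2}, where â(l, ξ) = ∫_{𝕋^d} a(x, ξ) e^{−2πi l·x} dx. Equivalently, the operator Op_ħ(a) is bounded on L²(𝕋^d) with ‖Op_ħ(a)‖_{L²→L²} ≤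 C_d Σ_{|α| ≤ d+1} ‖∂_x^α a‖_∞. -/
/-!
Integrating by parts `N` times in the direction `eᵢ` multiplies the Fourier coefficient by
`(2πi lᵢ)^N`, periodicity killing the boundary terms; choosing `i` with `|lᵢ| = ‖l‖_∞` gives
`|â(l, ξ)| ≤ M (1 + ‖l‖_∞)^{-(d+1)}` uniformly in `ξ`. Hence the kernel `â(p - k, 2πħk)` is
dominated by `M W(p - k)` with `W(l) = (1 + ‖l‖_∞)^{-(d+1)}` summable over `ℤ^d`, and Young's
inequality `‖W * v‖_{ℓ²} ≤ ‖W‖_{ℓ¹} ‖v‖_{ℓ²}` gives the bound with `C_d = ‖W‖_{ℓ¹}`.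
-/

open MeasureTheory Filter Real
open scoped Topology

noncomputable section

/-- `l·x = Σ i, l i * x i` for `l ∈ ℤ^d`, `x ∈ ℝ^d`. -/
def dotd {d : ℕ} (l : Fin d → ℤ) (x : Fin d → ℝ) : ℝ := ∑ i, (l i : ℝ) * x i

/-- The `l`-th Fourier coefficient of a function on `𝕋^d = ℝ^d/ℤ^d`:
`f̂(l) = ∫_{𝕋^d} f(x) e^{-2πi l·x} dx`. -/
def tcoef {d : ℕ} (f : (Fin d → ℝ) → ℂ) (l : Fin d → ℤ) : ℂ :=
  ∫ x in Set.Icc (0 : Fin d → ℝ) 1,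
    f x * Complex.exp (Complex.I * ((-(2 * π * dotd l x) : ℝ) : ℂ))

/-- `â(p - k, 2πhbk)`: the Fourier-side kernel of `Op_hb(a)` on `L²(𝕋^d)`. -/
def opKernel {d : ℕ} (a : (Fin d → ℝ) → (Fin d → ℝ) → ℂ) (hb : ℝ)
    (p k : Fin d → ℤ) : ℂ :=
  tcoef (fun x => a x fun i => 2 * π * hb * (k i)) (p - k)

open scoped ENNReal

theorem ENNReal.sq_tsum_mul_le {ι : Type*} (w f : ι → ℝ≥0∞) :
    (∑' i, w i * f i) ^ 2 ≤ (∑' i, w i) * ∑' i, w i * f i ^ 2 := by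
  have hsum : ∑' i, w i * f i ≤ (∑' i, w i) ^ (2⁻¹ : ℝ) * (∑' i, w i * f i ^ 2) ^ (2⁻¹ : ℝ) := by
    refine ENNReal.summable.tsum_le_of_sum_le fun s => ?_
    calc ∑ i ∈ s, w i * f i
        ≤ (∑ i ∈ s, w i) ^ (1 - (2 : ℝ)⁻¹) * (∑ i ∈ s, w i * f i ^ (2 : ℝ)) ^ (2 : ℝ)⁻¹ :=
          ENNReal.inner_le_weight_mul_Lp_of_nonneg s one_le_two w f
      _ ≤ (∑' i, w i) ^ (2⁻¹ : ℝ) * (∑' i, w i * f i ^ 2) ^ (2⁻¹ : ℝ) := by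
          norm_num only [ENNReal.rpow_two]
          gcongr <;> exact ENNReal.sum_le_tsum s
  calc (∑' i, w i * f i) ^ 2
      ≤ ((∑' i, w i) ^ (2⁻¹ : ℝ) * (∑' i, w i * f i ^ 2) ^ (2⁻¹ : ℝ)) ^ 2 := by gcongr
    _ = (∑' i, w i) * ∑' i, w i * f i ^ 2 := by
        rw [mul_pow, ← ENNReal.rpow_mul_natCast, ← ENNReal.rpow_mul_natCast]
        norm_num

theorem ENNReal.tsum_sq_tsum_conv_le {G : Type*} [AddGroup G] (W v : G → ℝ≥0∞) :
    ∑' p, (∑' k, W (p - k) * v k) ^ 2 ≤ (∑' l, W l) ^ 2 * ∑' k, v k ^ 2 := by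
  have hrow : ∀ p, ∑' k, W (p - k) = ∑' l, W l := fun p => (Equiv.subLeft p).tsum_eq W
  have hcol : ∀ k, ∑' p, W (p - k) = ∑' l, W l := fun k => (Equiv.subRight k).tsum_eq W
  calc ∑' p, (∑' k, W (p - k) * v k) ^ 2
      ≤ ∑' p, (∑' k, W (p - k)) * ∑' k, W (p - k) * v k ^ 2 :=
        ENNReal.tsum_le_tsum fun p => ENNReal.sq_tsum_mul_le _ _
    _ = (∑' l, W l) * ∑' k, (∑' p, W (p - k)) * v k ^ 2 := by
        simp_rw [hrow, ENNReal.tsum_mul_left, ← ENNReal.tsum_mul_right]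
        rw [ENNReal.tsum_comm]
    _ = (∑' l, W l) ^ 2 * ∑' k, v k ^ 2 := by
        simp_rw [hcol, ENNReal.tsum_mul_left]; ring

theorem sqrt_tsum_norm_tsum_mul_sq_le {G R : Type*} [AddGroup G] [NormedRing R]
    {K : G → G → R} {W : G → ℝ} (hW : Summable W) (hK : ∀ p k, ‖K p k‖ ≤ W (p - k))
    {u : G → R} (hu : Summable fun k => ‖u k‖ ^ 2) :
    √(∑' p, ‖∑' k, K p k * u k‖ ^ 2) ≤ (∑' l, W l) * √(∑' k, ‖u k‖ ^ 2) := by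
  have hW0 : ∀ l, 0 ≤ W l := fun l => (norm_nonneg _).trans (by simpa using hK l 0)
  have hS : 0 ≤ ∑' l, W l := tsum_nonneg hW0
  have hpoint : ∀ p, ‖∑' k, K p k * u k‖ₑ ≤ ∑' k, ENNReal.ofReal (W (p - k)) * ‖u k‖ₑ :=
    fun p => tsum_of_enorm_bounded ENNReal.summable.hasSum fun k => by
      refine (enorm_smul_le (r := K p k) (x := u k)).trans ?_
      gcongr
      rw [← ofReal_norm]
      exact ENNReal.ofReal_le_ofReal (hK p k)
  have hennreal : ∑' p, ‖∑' k, K p k * u k‖ₑ ^ 2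
      ≤ ENNReal.ofReal ((∑' l, W l) ^ 2 * ∑' k, ‖u k‖ ^ 2) := by
    calc ∑' p, ‖∑' k, K p k * u k‖ₑ ^ 2
        ≤ ∑' p, (∑' k, ENNReal.ofReal (W (p - k)) * ‖u k‖ₑ) ^ 2 := by
          gcongr with p; exact hpoint p
      _ ≤ (∑' l, ENNReal.ofReal (W l)) ^ 2 * ∑' k, ‖u k‖ₑ ^ 2 :=
          ENNReal.tsum_sq_tsum_conv_le _ _
      _ = ENNReal.ofReal ((∑' l, W l) ^ 2 * ∑' k, ‖u k‖ ^ 2) := by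
        rw [ENNReal.ofReal_mul (by positivity), ENNReal.ofReal_pow hS,
          ENNReal.ofReal_tsum_of_nonneg hW0 hW,
          ENNReal.ofReal_tsum_of_nonneg (fun k => by positivity) hu]
        simp_rw [ENNReal.ofReal_pow (norm_nonneg _), ofReal_norm]
  -- `tsum_toReal_eq` needs no summability, so the real sum on the left is covered as well.
  have hreal : ∑' p, ‖∑' k, K p k * u k‖ ^ 2 ≤ (∑' l, W l) ^ 2 * ∑' k, ‖u k‖ ^ 2 := by
    have := ENNReal.toReal_mono ENNReal.ofReal_ne_top hennreal
    rwa [ENNReal.tsum_toReal_eq (fun p => by simp), ENNReal.toReal_ofReal (by positivity)] at this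
  calc √(∑' p, ‖∑' k, K p k * u k‖ ^ 2) ≤ √((∑' l, W l) ^ 2 * ∑' k, ‖u k‖ ^ 2) :=
        Real.sqrt_le_sqrt hreal
    _ = (∑' l, W l) * √(∑' k, ‖u k‖ ^ 2) := by
        rw [Real.sqrt_mul (sq_nonneg _), Real.sqrt_sq hS]

open Submodule in
theorem summable_one_add_norm_pow_inv {ι : Type*} [Fintype ι] {N : ℕ}
    (hN : Fintype.card ι < N) : Summable fun l : ι → ℤ => ((1 + ‖l‖) ^ N)⁻¹ := by
  let L := span ℤ (Set.range (Pi.basisFun ℝ ι))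
  have hrank : Module.finrank ℤ L = Fintype.card ι := by
    simpa using finrank_span_eq_card ((Pi.basisFun ℝ ι).linearIndependent.restrict_scalars' ℤ)
  let φ : (ι → ℤ) → L := fun l => ⟨fun i => (l i : ℝ), by
    rw [Module.Basis.mem_span_iff_repr_mem]; simp⟩
  have hφ : Function.Injective φ := fun l l' h => by
    ext i; simpa [φ] using congrFun (congrArg Subtype.val h) i
  have hnorm : ∀ l, ‖φ l‖ = ‖l‖ := fun _ => rfl
  refine ((ZLattice.summable_norm_pow_inv L N (hrank ▸ hN)).comp_injective
    hφ).of_norm_bounded_eventually ?_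
  filter_upwards [eventually_cofinite_ne 0] with l hl
  have hl' : 0 < ‖l‖ := norm_pos_iff.mpr hl
  simp only [Function.comp_apply, hnorm, norm_inv, norm_pow, Real.norm_eq_abs]
  rw [abs_of_pos (by positivity), ← inv_pow]
  gcongr
  linarith

section Torus

variable {d : ℕ}

def IntPeriodic {α : Type*} (f : (Fin d → ℝ) → α) : Prop :=
  ∀ (x : Fin d → ℝ) (j : Fin d → ℤ), f (x + fun i => (j i : ℝ)) = f x

def torusChar (l : Fin d → ℤ) (x : Fin d → ℝ) : ℂ :=
  Complex.exp (Complex.I * ((-(2 * π * dotd l x) : ℝ) : ℂ))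

theorem tcoef_eq_integral (f : (Fin d → ℝ) → ℂ) (l : Fin d → ℤ) :
    tcoef f l = ∫ x in Set.Icc 0 1, f x * torusChar l x := rfl

def dotdCLM (l : Fin d → ℤ) : (Fin d → ℝ) →L[ℝ] ℝ :=
  ∑ i, (l i : ℝ) • ContinuousLinearMap.proj i

theorem dotd_eq_dotdCLM (l : Fin d → ℤ) : dotd l = dotdCLM l := by
  ext x; simp [dotd, dotdCLM]

theorem torusChar_intPeriodic (l : Fin d → ℤ) : IntPeriodic (torusChar l) := fun x j => by
  have hdot : dotd l (x + fun i => (j i : ℝ)) = dotd l x + ((∑ i, l i * j i : ℤ) : ℝ) := by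
    simp [dotd, mul_add, Finset.sum_add_distrib]
  have hexp : Complex.I * ((-(2 * π * (dotd l x + ((∑ i, l i * j i : ℤ) : ℝ))) : ℝ) : ℂ)
      = Complex.I * ((-(2 * π * dotd l x) : ℝ) : ℂ)
        + (-(∑ i, l i * j i) : ℤ) * (2 * π * Complex.I) := by
    push_cast; ring
  rw [torusChar, torusChar, hdot, hexp, Complex.exp_add, Complex.exp_int_mul_two_pi_mul_I,
    mul_one]

theorem torusChar_eq_cexp_comp (l : Fin d → ℤ) :
    torusChar l = fun x => Complex.exp
      (((-(2 * π) * Complex.I) • Complex.ofRealCLM.comp (dotdCLM l)) x) := by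
  ext x; simp [torusChar, dotd_eq_dotdCLM]; ring_nf

theorem contDiff_torusChar (l : Fin d → ℤ) {n : WithTop ℕ∞} : ContDiff ℝ n (torusChar l) := by
  rw [torusChar_eq_cexp_comp]
  exact (ContinuousLinearMap.contDiff _).cexp

theorem fderiv_torusChar_single (l : Fin d → ℤ) (x : Fin d → ℝ) (i : Fin d) :
    fderiv ℝ (torusChar l) x (Pi.single i 1) = -(2 * π * l i * Complex.I) * torusChar l x := by
  have h := (ContinuousLinearMap.hasFDerivAt
    ((-(2 * π) * Complex.I) • Complex.ofRealCLM.comp (dotdCLM l)) (x := x)).cexp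
  rw [← torusChar_eq_cexp_comp] at h
  rw [h.fderiv]
  simp [dotdCLM, Pi.single_apply, torusChar_eq_cexp_comp]
  ring

theorem Fin.insertNth_one_eq_insertNth_zero_add {n : ℕ} (i : Fin (n + 1)) (y : Fin n → ℝ) :
    i.insertNth 1 y = i.insertNth 0 y + fun t => ((Pi.single i 1 : Fin (n + 1) → ℤ) t : ℝ) := by
  ext t
  induction t using i.succAboveCases <;> simp

-- Divergence theorem for the field `g eᵢ`: the faces `xᵢ = 0` and `xᵢ = 1` cancel by periodicity.
theorem integral_fderiv_single_eq_zero {E : Type*} [NormedAddCommGroup E] [NormedSpace ℝ E]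
    [CompleteSpace E] {g : (Fin d → ℝ) → E} (hg : ContDiff ℝ 1 g) (hper : IntPeriodic g)
    (i : Fin d) : ∫ x in Set.Icc 0 1, fderiv ℝ g x (Pi.single i 1) = 0 := by
  obtain ⟨n, rfl⟩ := Nat.exists_eq_add_one_of_ne_zero i.pos.ne'
  have hdiff : Differentiable ℝ g := hg.differentiable one_ne_zero
  have hsum : ∀ x, ∑ j, (Pi.single i (fderiv ℝ g) : Fin (n + 1) → _) j x (Pi.single j 1)
      = fderiv ℝ g x (Pi.single i 1) := fun x => by
    rw [Finset.sum_eq_single i (fun j _ hj => by simp [Pi.single_eq_of_ne hj]) (by simp)]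
    simp
  have hdiv := integral_divergence_of_hasFDerivAt_off_countable' 0 1 zero_le_one
    (Pi.single i g) (Pi.single i (fderiv ℝ g)) ∅ Set.countable_empty
    (fun j => by
      rcases eq_or_ne j i with rfl | hj
      · simpa using hg.continuous.continuousOn
      · rw [Pi.single_eq_of_ne hj]; exact continuousOn_const)
    (fun x _ j => by
      rcases eq_or_ne j i with rfl | hj
      · simpa using (hdiff x).hasFDerivAt
      · rw [Pi.single_eq_of_ne hj, Pi.single_eq_of_ne hj]; exact hasFDerivAt_const 0 x)
    (by simpa only [hsum] using
      ((hg.continuous_fderiv one_ne_zero).clm_apply continuous_const).integrableOn_Icc)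
  rw [Finset.sum_eq_single i (fun j _ hj => by simp [Pi.single_eq_of_ne hj]) (by simp)] at hdiv
  simp only [hsum, Pi.single_eq_same, Pi.one_apply, Pi.zero_apply] at hdiv
  rw [hdiv, sub_eq_zero]
  refine setIntegral_congr_fun measurableSet_Icc fun y _ => ?_
  rw [Fin.insertNth_one_eq_insertNth_zero_add, hper]

theorem tcoef_fderiv_single {f : (Fin d → ℝ) → ℂ} (hf : ContDiff ℝ 1 f) (hper : IntPeriodic f)
    (i : Fin d) (l : Fin d → ℤ) :
    tcoef (fun x => fderiv ℝ f x (Pi.single i 1)) l = 2 * π * l i * Complex.I * tcoef f l := by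
  have hprod : IntPeriodic fun x => f x * torusChar l x := fun x j => by
    dsimp only
    rw [hper, torusChar_intPeriodic]
  have hderiv : ∀ x, fderiv ℝ (fun x => f x * torusChar l x) x (Pi.single i 1)
      = fderiv ℝ f x (Pi.single i 1) * torusChar l x
        - 2 * π * l i * Complex.I * (f x * torusChar l x) := fun x => by
    rw [fderiv_fun_mul (hf.differentiable one_ne_zero x)
      ((contDiff_torusChar l (n := 1)).differentiable one_ne_zero x)]
    simp [fderiv_torusChar_single]
    ring
  have hzero := integral_fderiv_single_eq_zero (hf.mul (contDiff_torusChar l)) hprod i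
  simp only [hderiv] at hzero
  rw [integral_sub, integral_const_mul] at hzero
  · rw [tcoef_eq_integral, tcoef_eq_integral]; exact sub_eq_zero.mp hzero
  · exact (((hf.continuous_fderiv one_ne_zero).clm_apply continuous_const).mul
      (contDiff_torusChar l (n := 0)).continuous).integrableOn_Icc
  · exact ((hf.continuous.mul (contDiff_torusChar l (n := 0)).continuous).const_mul
      _).integrableOn_Icc

theorem IntPeriodic.iteratedFDeriv {E : Type*} [NormedAddCommGroup E] [NormedSpace ℝ E]
    {f : (Fin d → ℝ) → E} (hf : IntPeriodic f) (m : ℕ) :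
    IntPeriodic (iteratedFDeriv ℝ m f) := fun x j => by
  rw [← iteratedFDeriv_comp_add_right]
  congr
  exact funext fun y => hf y j

theorem tcoef_iteratedFDeriv_single {N : ℕ} {f : (Fin d → ℝ) → ℂ} (hf : ContDiff ℝ N f)
    (hper : IntPeriodic f) (i : Fin d) (l : Fin d → ℤ) {m : ℕ} (hm : m ≤ N) :
    tcoef (fun x => iteratedFDeriv ℝ m f x fun _ => Pi.single i 1) l
      = (2 * π * l i * Complex.I) ^ m * tcoef f l := by
  induction m with
  | zero => simp
  | succ m ih =>
    set g := fun x => iteratedFDeriv ℝ m f x fun _ => Pi.single i 1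
    have hg : ContDiff ℝ 1 g :=
      (ContinuousMultilinearMap.apply ℝ _ ℂ _).contDiff.comp
        (hf.iteratedFDeriv_right (by norm_cast; omega))
    have hgper : IntPeriodic g := fun x j => by
      simp only [g, hper.iteratedFDeriv m x j]
    have hsucc : (fun x => iteratedFDeriv ℝ (m + 1) f x fun _ => Pi.single i 1)
        = fun x => fderiv ℝ g x (Pi.single i 1) := funext fun x => by
      rw [iteratedFDeriv_succ_apply_left, fderiv_continuousMultilinear_apply_const_apply
        (hf.differentiable_iteratedFDeriv (by norm_cast) x)]
      rfl
    rw [hsucc, tcoef_fderiv_single hg hgper, ih (by omega), pow_succ]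
    ring

theorem norm_tcoef_le {f : (Fin d → ℝ) → ℂ} {M : ℝ} (hM : ∀ x, ‖f x‖ ≤ M) (l : Fin d → ℤ) :
    ‖tcoef f l‖ ≤ M := by
  have hvol : volume (Set.Icc (0 : Fin d → ℝ) 1) = 1 := by rw [Real.volume_Icc_pi]; simp
  have hχ : ∀ x, ‖torusChar l x‖ = 1 := fun x => by simp [torusChar, Complex.norm_exp]
  rw [tcoef_eq_integral]
  simpa [Measure.real, hvol] using norm_setIntegral_le_of_norm_le_const
    (μ := volume) (s := Set.Icc 0 1) (f := fun x => f x * torusChar l x) (by simp [hvol])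
    fun x _ => by rw [norm_mul, hχ, mul_one]; exact hM x

theorem norm_tcoef_le_mul_one_add_norm_pow_inv {N : ℕ} {f : (Fin d → ℝ) → ℂ}
    (hf : ContDiff ℝ N f) (hper : IntPeriodic f) {M : ℝ} (h0 : ∀ x, ‖f x‖ ≤ M)
    (hN : ∀ x, ‖iteratedFDeriv ℝ N f x‖ ≤ M) (l : Fin d → ℤ) :
    ‖tcoef f l‖ ≤ M * ((1 + ‖l‖) ^ N)⁻¹ := by
  have hdir : ∀ i, ‖tcoef f l‖ * (2 * π * ‖l i‖) ^ N ≤ M := fun i => by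
    have hbound : ∀ x, ‖iteratedFDeriv ℝ N f x fun _ => Pi.single i 1‖ ≤ M := fun x =>
      ((iteratedFDeriv ℝ N f x).le_opNorm _).trans (by simpa [Pi.norm_single] using hN x)
    have := norm_tcoef_le hbound l
    rw [tcoef_iteratedFDeriv_single hf hper i l le_rfl] at this
    simpa [mul_comm, Int.norm_eq_abs, abs_of_pos Real.pi_pos] using this
  rw [le_mul_inv_iff₀ (by positivity)]
  rcases eq_or_ne l 0 with rfl | hl
  · simpa using norm_tcoef_le h0 0
  obtain ⟨j, hj⟩ := Function.ne_iff.mp hl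
  obtain ⟨i, -, hmax⟩ := Finset.exists_max_image Finset.univ (fun j => ‖l j‖) ⟨j, by simp⟩
  have hli : ‖l‖ = ‖l i‖ :=
    le_antisymm ((pi_norm_le_iff_of_nonneg (norm_nonneg _)).mpr fun j => hmax j (by simp))
      (norm_le_pi_norm l i)
  have h1 : 1 ≤ ‖l i‖ := le_trans (by rw [Int.norm_eq_abs]; exact_mod_cast Int.one_le_abs hj)
    (hmax j (by simp))
  calc ‖tcoef f l‖ * (1 + ‖l‖) ^ N ≤ ‖tcoef f l‖ * (2 * π * ‖l i‖) ^ N := by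
        gcongr
        nlinarith [Real.pi_gt_three]
    _ ≤ M := hdir i

end Torus

theorem stmt17_general (d : ℕ) :
    ∃ C > 0, ∀ a : (Fin d → ℝ) → (Fin d → ℝ) → ℂ,
      (Continuous fun p : (Fin d → ℝ) × (Fin d → ℝ) => a p.1 p.2) →
      (∀ (x ξ : Fin d → ℝ) (j : Fin d → ℤ), a (x + fun i => (j i : ℝ)) ξ = a x ξ) →
      (∀ ξ : Fin d → ℝ, ContDiff ℝ (d + 1 : ℕ) fun x => a x ξ) →
      ∀ M : ℝ,
      (∀ n : ℕ, n ≤ d + 1 → ∀ x ξ : Fin d → ℝ,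
          ‖iteratedFDeriv ℝ n (fun y => a y ξ) x‖ ≤ M) →
      ∀ hb ∈ Set.Ioc (0:ℝ) 1, ∀ u : (Fin d → ℤ) → ℂ, Summable (fun k => ‖u k‖ ^ 2) →
        Real.sqrt (∑' p : Fin d → ℤ, ‖∑' k : Fin d → ℤ, opKernel a hb p k * u k‖ ^ 2)
          ≤ C * M * Real.sqrt (∑' k : Fin d → ℤ, ‖u k‖ ^ 2) := by
  have hW : Summable fun l : Fin d → ℤ => ((1 + ‖l‖) ^ (d + 1))⁻¹ :=
    summable_one_add_norm_pow_inv (by simp)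
  refine ⟨_, hW.tsum_pos (fun l => by positivity) 0 (by simp), ?_⟩
  intro a _ hper hsmooth M hM hb _ u hu
  have hker : ∀ p k, ‖opKernel a hb p k‖ ≤ M * ((1 + ‖p - k‖) ^ (d + 1))⁻¹ := fun p k =>
    norm_tcoef_le_mul_one_add_norm_pow_inv (hsmooth _) (fun x j => hper x _ j)
      (fun x => by simpa using hM 0 (by omega) x _) (fun x => hM (d + 1) le_rfl x _) (p - k)
  calc _ ≤ (∑' l : Fin d → ℤ, M * ((1 + ‖l‖) ^ (d + 1))⁻¹) * √(∑' k, ‖u k‖ ^ 2) :=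
        sqrt_tsum_norm_tsum_mul_sq_le (hW.mul_left M) hker hu
    _ = _ := by rw [tsum_mul_left]; ring

/-- Calderón–Vaillancourt on `𝕋^d`, first version: there is a constant
`C_d`, depending only on `d`, so that for every symbol `a(x,ξ)` which is continuous,
`ℤ^d`-periodic in `x`, and whose `x`-derivatives up to order `d+1` exist, are continuous
and uniformly bounded by `M`, every `hb ∈ (0,1]` and every `u ∈ ℓ²(ℤ^d)`,
`(Σ_p |Σ_k â(p-k, 2πhbk) u_k|²)^{1/2} ≤ C_d M (Σ_k |u_k|²)^{1/2}`;
i.e. `‖Op_hb(a)‖_{L²(𝕋^d) → L²(𝕋^d)} ≤ C_d Σ_{|α| ≤ d+1} ‖∂_x^α a‖_∞`. -/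
theorem stmt17 (d : ℕ) (hd : 1 ≤ d) :
    ∃ C > 0, ∀ a : (Fin d → ℝ) → (Fin d → ℝ) → ℂ,
      (Continuous fun p : (Fin d → ℝ) × (Fin d → ℝ) => a p.1 p.2) →
      (∀ (x ξ : Fin d → ℝ) (j : Fin d → ℤ), a (x + fun i => (j i : ℝ)) ξ = a x ξ) →
      (∀ ξ : Fin d → ℝ, ContDiff ℝ (d + 1 : ℕ) fun x => a x ξ) →
      ∀ M : ℝ,
      (∀ n : ℕ, n ≤ d + 1 → ∀ x ξ : Fin d → ℝ,
          ‖iteratedFDeriv ℝ n (fun y => a y ξ) x‖ ≤ M) →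
      ∀ hb ∈ Set.Ioc (0:ℝ) 1, ∀ u : (Fin d → ℤ) → ℂ, Summable (fun k => ‖u k‖ ^ 2) →
        Real.sqrt (∑' p : Fin d → ℤ, ‖∑' k : Fin d → ℤ, opKernel a hb p k * u k‖ ^ 2)
          ≤ C * M * Real.sqrt (∑' k : Fin d → ℤ, ‖u k‖ ^ 2) :=
  stmt17_general d
end
end
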